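/- arXiv:2302.00851 — 11 statements merged into one kernel-verified Lean document; each statement's English description precedes it below -/
import Mathlib

section
/- Let G be an edge-colored graph on n ≥ 13 vertices with δ^c(G) ≥ (n+1)/2. Then G contains two rainbow triangles sharing exactly one common vertex, i.e., there exist a vertex v and four distinct vertices x₁, y₁, x₂, y₂, all adjacent to v, with x₁y₁ and x₂y₂ edges of G, such that both triangles v x₁ y₁ and v x₂ y₂ are rainbow. -/
/-!
For a vertex `v` of degree `d` and colour degree `k`, consider the ordered pairs `(x, y)` of
distinct neighbours of `v`. Unless `v x y` is a rainbow triangle, `vx` and `vy` have the same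
colour (at most `(d - k)(d - k + 1)` pairs), or `x` and `y` are not adjacent, or `xy` repeats the
colour of `vx` or of `vy`. Moving `x` to the front, the last two kinds become a non-neighbour of
`x` and a pair of equally coloured edges at `x`, so summing over `v` bounds them globally. With
`2k ≥ n + 1` and `n ≥ 13` every vertex then contributes at least `7` ordered rainbow triangles,
so there are at least `7n / 6 > n` rainbow triangles.

On the other hand, let `F` be a family of `3`-sets no two of which meet in exactly one point.
The members meeting a fixed `T ∈ F` meet it in two points; they are disjoint from all other
members and either have pairwise distinct points outside `T` or all lie in a `4`-set. By
induction `|F| ≤ |⋃ F|`, so `F` has at most `n` members.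
-/

/-- The triangle on vertices `u`, `v`, `w` exists in `G` and is rainbow under the
edge-coloring `c`, i.e. its three edges receive pairwise distinct colors. -/
def IsRainbowTri {V : Type*} (G : SimpleGraph V) (c : Sym2 V → ℕ) (u v w : V) : Prop :=
  G.Adj u v ∧ G.Adj u w ∧ G.Adj v w ∧
    c s(u, v) ≠ c s(u, w) ∧ c s(u, v) ≠ c s(v, w) ∧ c s(u, w) ≠ c s(v, w)

/-- The color degree of `v`: the number of distinct colors on edges incident with `v`. -/
noncomputable def colorDeg {V : Type*} (G : SimpleGraph V) (c : Sym2 V → ℕ) (v : V) : ℕ :=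
  Set.ncard {β : ℕ | ∃ u, G.Adj v u ∧ c s(v, u) = β}

open Finset

namespace Finset

lemma sum_mul_succ_le_sum_mul_succ {ι : Type*} (s : Finset ι) (f : ι → ℕ) :
    ∑ i ∈ s, f i * (f i + 1) ≤ (∑ i ∈ s, f i) * (∑ i ∈ s, f i + 1) := by
  have := sum_sq_le_sq_sum_of_nonneg (s := s) (f := f) fun _ _ => Nat.zero_le _
  simp only [mul_add, mul_one, sum_add_distrib, ← sq]
  omega

lemma card_offDiag_filter_eq_le {α β : Type*} [DecidableEq β] (s : Finset α) (f : α → β) :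
    #{p ∈ s.offDiag | f p.1 = f p.2} ≤ (#s - #(s.image f)) * (#s - #(s.image f) + 1) := by
  set m : β → ℕ := fun b => #{x ∈ s | f x = b}
  have hm : ∀ b ∈ s.image f, 1 ≤ m b := by
    intro b hb
    obtain ⟨x, hx, rfl⟩ := mem_image.mp hb
    exact card_pos.mpr ⟨x, mem_filter.mpr ⟨hx, rfl⟩⟩
  have hsum : ∑ b ∈ s.image f, (m b - 1) = #s - #(s.image f) := by
    have hfib : #s = ∑ b ∈ s.image f, m b :=
      card_eq_sum_card_fiberwise fun x hx => mem_image_of_mem f hx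
    have : ∑ b ∈ s.image f, (m b - 1) + #(s.image f) = ∑ b ∈ s.image f, m b := by
      rw [card_eq_sum_ones, ← sum_add_distrib]
      exact sum_congr rfl fun b hb => Nat.sub_add_cancel (hm b hb)
    omega
  have hpairs : #{p ∈ s.offDiag | f p.1 = f p.2} = ∑ b ∈ s.image f, (m b - 1) * (m b - 1 + 1) := by
    rw [card_eq_sum_card_fiberwise (f := fun p => f p.1) (t := s.image f)]
    · refine sum_congr rfl fun b hb => ?_
      have : {p ∈ {p ∈ s.offDiag | f p.1 = f p.2} | f p.1 = b} = {x ∈ s | f x = b}.offDiag := by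
        ext p
        simp only [mem_filter, mem_offDiag]
        grind
      rw [this, offDiag_card, Nat.sub_add_cancel (hm b hb)]
      exact (Nat.sub_one_mul _ _).symm
    · intro p hp
      exact mem_image_of_mem f (mem_offDiag.mp (mem_filter.mp hp).1).1
  rw [hpairs, ← hsum]
  exact sum_mul_succ_le_sum_mul_succ _ _

lemma sum_card_le_sum_card_of_rotate {ι : Type*} [Fintype ι] {A B : ι → Finset (ι × ι)}
    (h : ∀ v x y, (x, y) ∈ A v → (v, y) ∈ B x) : ∑ v, #(A v) ≤ ∑ v, #(B v) := by
  rw [← card_sigma, ← card_sigma]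
  refine card_le_card_of_injOn (fun t => ⟨t.2.1, (t.1, t.2.2)⟩) ?_ ?_
  · rintro ⟨v, x, y⟩ ht
    simp only [coe_sigma, Set.mem_sigma_iff, mem_coe, mem_univ, true_and] at ht ⊢
    exact h v x y ht
  · rintro ⟨v, x, y⟩ _ ⟨v', x', y'⟩ _ he
    simp only [Sigma.mk.injEq, Prod.mk.injEq, heq_eq_eq] at he
    obtain ⟨rfl, rfl, rfl⟩ := he
    rfl

variable {α : Type*} [DecidableEq α]

lemma inter_eq_inter_of_inter_subset {S S' T : Finset α} (hT : #T = 3) (hS : #(S ∩ T) = 2)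
    (hS' : #(S' ∩ T) = 2) (hsub : S ∩ S' ⊆ T) (h : #(S ∩ S') ≠ 1) : S ∩ T = S' ∩ T := by
  have hinter : S ∩ S' = (S ∩ T) ∩ (S' ∩ T) := by
    ext z; have := @hsub z; simp only [mem_inter] at this ⊢; tauto
  have hunion : #((S ∩ T) ∪ (S' ∩ T)) ≤ 3 :=
    hT ▸ card_le_card (union_subset inter_subset_right inter_subset_right)
  have hincl := card_union_add_card_inter (S ∩ T) (S' ∩ T)
  have hle : S ∩ T ⊆ S' ∩ T := by
    rw [← inter_eq_left]
    exact eq_of_subset_of_card_le inter_subset_left (by rw [← hinter] at hincl ⊢; omega)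
  exact eq_of_subset_of_card_le hle (by omega)

variable {F : Finset (Finset α)} {T : Finset α}

lemma card_inter_eq_two_of_mem_erase (h3 : (F : Set (Finset α)).Sized 3) (hT : T ∈ F)
    (h2 : ∀ S ∈ F, 2 ≤ #(S ∩ T)) {S : Finset α} (hS : S ∈ F.erase T) :
    #(S ∩ T) = 2 ∧ #(S \ T) = 1 := by
  obtain ⟨hST, hSF⟩ := mem_erase.mp hS
  have hS3 : #S = 3 := h3 hSF
  have hlt : #(S ∩ T) < 3 := by
    refine lt_of_le_of_ne (hS3 ▸ card_le_card inter_subset_left) fun h => hST ?_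
    have hS : S ∩ T = S := eq_of_subset_of_card_le inter_subset_left (by omega)
    exact eq_of_subset_of_card_le (hS ▸ inter_subset_right) (by rw [h3 hT, hS3])
  have := card_inter_add_card_sdiff S T
  have := h2 S hSF
  omega

lemma subset_insert_of_sdiff_eq_singleton (h3 : (F : Set (Finset α)).Sized 3)
    (hF : (F : Set (Finset α)).Pairwise fun S S' => #(S ∩ S') ≠ 1) (hT : T ∈ F)
    (h2 : ∀ S ∈ F, 2 ≤ #(S ∩ T)) {S₁ S₂ : Finset α} (hS₁ : S₁ ∈ F.erase T)
    (hS₂ : S₂ ∈ F.erase T) (hne : S₁ ≠ S₂) {x : α} (hx₁ : S₁ \ T = {x}) (hx₂ : S₂ \ T = {x})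
    {S : Finset α} (hS : S ∈ F) : S ⊆ insert x T := by
  have key : ∀ S ∈ F.erase T, #(S ∩ T) = 2 ∧ #(S \ T) = 1 := fun _ =>
    card_inter_eq_two_of_mem_erase h3 hT h2
  by_cases hST : S = T
  · exact hST ▸ subset_insert x T
  have hS' : S ∈ F.erase T := mem_erase.mpr ⟨hST, hS⟩
  obtain ⟨y, hy⟩ := card_eq_one.mp (key S hS').2
  by_cases hyx : y = x
  · rw [insert_eq, ← sup_eq_union, ← sdiff_le_iff', hy, hyx]
  exfalso
  -- a member whose outside point is `x` meets `S` only inside `T`, so it shares `S ∩ T`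
  have hxS : ∀ S' ∈ F.erase T, S' \ T = {x} → S' = (S ∩ T) ∪ {x} := by
    intro S' hS'₁ hS'x
    have hmeet : S' ∩ S ⊆ T := by
      intro z hz
      by_contra hzT
      have hzx : z ∈ S' \ T := mem_sdiff.mpr ⟨(mem_inter.mp hz).1, hzT⟩
      have hzy : z ∈ S \ T := mem_sdiff.mpr ⟨(mem_inter.mp hz).2, hzT⟩
      rw [hS'x, mem_singleton] at hzx
      rw [hy, mem_singleton] at hzy
      exact hyx (hzy.symm.trans hzx)
    have hne : S' ≠ S := by
      rintro rfl
      exact hyx (singleton_injective (hy.symm.trans hS'x))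
    rw [← inter_eq_inter_of_inter_subset (h3 hT) (key S' hS'₁).1 (key S hS').1 hmeet
      (hF (mem_of_mem_erase hS'₁) hS hne), ← hS'x]
    exact (sup_inf_sdiff S' T).symm
  exact hne ((hxS S₁ hS₁ hx₁).trans (hxS S₂ hS₂ hx₂).symm)

lemma card_le_card_biUnion_of_two_le_card_inter (h3 : (F : Set (Finset α)).Sized 3)
    (hF : (F : Set (Finset α)).Pairwise fun S S' => #(S ∩ S') ≠ 1) (hT : T ∈ F)
    (h2 : ∀ S ∈ F, 2 ≤ #(S ∩ T)) : #F ≤ #(F.biUnion id) := by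
  set U := F.biUnion id
  have hSU : ∀ S ∈ F, S ⊆ U := fun S hS => subset_biUnion_of_mem id hS
  have hT3 : #T = 3 := h3 hT
  have hF1 : #F = #(F.erase T) + 1 := (card_erase_add_one hT).symm
  have key : ∀ S ∈ F.erase T, #(S ∩ T) = 2 ∧ #(S \ T) = 1 := fun _ =>
    card_inter_eq_two_of_mem_erase h3 hT h2
  by_cases hinj : Set.InjOn (· \ T) (F.erase T)
  · have : #(F.erase T) ≤ #((U \ T).powersetCard 1) := by
      refine card_le_card_of_injOn _ (fun S hS => ?_) hinj
      exact mem_powersetCard.mpr ⟨sdiff_subset_sdiff (hSU S (mem_of_mem_erase hS)) le_rfl,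
        (key S hS).2⟩
    rw [card_powersetCard, Nat.choose_one_right, card_sdiff_of_subset (hSU T hT), hT3] at this
    have := card_le_card (hSU T hT)
    omega
  · simp only [Set.InjOn, not_forall] at hinj
    obtain ⟨S₁, hS₁, S₂, hS₂, hext, hne⟩ := hinj
    obtain ⟨x, hx⟩ := card_eq_one.mp (key S₁ hS₁).2
    have hxS₁ : x ∈ S₁ \ T := hx ▸ mem_singleton_self x
    have hsub : ∀ S ∈ F, S ⊆ insert x T := fun S =>
      subset_insert_of_sdiff_eq_singleton h3 hF hT h2 hS₁ hS₂ hne hx (hext ▸ hx)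
    calc #F ≤ #((insert x T).powersetCard 3) :=
          card_le_card fun S hS => mem_powersetCard.mpr ⟨hsub S hS, h3 hS⟩
      _ = #(insert x T) := by
          rw [card_powersetCard, card_insert_of_notMem (mem_sdiff.mp hxS₁).2, hT3]; rfl
      _ ≤ #U := card_le_card (insert_subset (hSU S₁ (mem_of_mem_erase hS₁) (mem_sdiff.mp hxS₁).1)
          (hSU T hT))

lemma disjoint_of_card_inter_lt_two (h3 : (F : Set (Finset α)).Sized 3)
    (hF : (F : Set (Finset α)).Pairwise fun S S' => #(S ∩ S') ≠ 1) (hT : T ∈ F)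
    {P S : Finset α} (hP : P ∈ F) (hPT : 2 ≤ #(P ∩ T)) (hS : S ∈ F) (hST : #(S ∩ T) < 2) :
    Disjoint P S := by
  have hne : ∀ R, 2 ≤ #(R ∩ T) → S ≠ R := by rintro R hR rfl; omega
  have hST0 : S ∩ T = ∅ := by
    have := hF hS hT (hne T (by rw [inter_self, h3 hT]; omega))
    rw [← card_eq_zero]
    omega
  have hSP : #(S ∩ P) ≤ 1 := by
    have hsub : S ∩ P ⊆ P \ T := fun z hz => mem_sdiff.mpr ⟨(mem_inter.mp hz).2, fun hzT =>
      notMem_empty z (hST0 ▸ mem_inter.mpr ⟨(mem_inter.mp hz).1, hzT⟩)⟩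
    have := card_inter_add_card_sdiff P T
    have := h3 hP
    have := card_le_card hsub
    omega
  have := hF hS hP (hne P hPT)
  rw [disjoint_iff_inter_eq_empty, inter_comm, ← card_eq_zero]
  omega

theorem card_le_card_biUnion_of_sized_three (h3 : (F : Set (Finset α)).Sized 3)
    (hF : (F : Set (Finset α)).Pairwise fun S S' => #(S ∩ S') ≠ 1) :
    #F ≤ #(F.biUnion id) := by
  induction F using strongInduction with
  | H F ih =>
  obtain rfl | ⟨T, hT⟩ := F.eq_empty_or_nonempty
  · simp
  set B := F.filter fun S => 2 ≤ #(S ∩ T)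
  set F' := F.filter fun S => ¬ 2 ≤ #(S ∩ T)
  have hTB : T ∈ B := mem_filter.mpr ⟨hT, by rw [inter_self, h3 hT]; omega⟩
  have hF' : F' ⊂ F := filter_ssubset.mpr ⟨T, hT, not_not.mpr (mem_filter.mp hTB).2⟩
  have hdisj : Disjoint (B.biUnion id) (F'.biUnion id) := by
    simp only [disjoint_biUnion_left, disjoint_biUnion_right, id]
    intro S hS P hP
    exact disjoint_of_card_inter_lt_two h3 hF hT (mem_filter.mp hP).1 (mem_filter.mp hP).2
      (mem_filter.mp hS).1 (not_le.mp (mem_filter.mp hS).2)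
  have hB : #B ≤ #(B.biUnion id) :=
    card_le_card_biUnion_of_two_le_card_inter (h3.mono (filter_subset _ F))
      (hF.mono (filter_subset _ F)) hTB fun S hS => (mem_filter.mp hS).2
  have hF'U : #F' ≤ #(F'.biUnion id) :=
    ih F' hF' (h3.mono (filter_subset _ F)) (hF.mono (filter_subset _ F))
  have hcard : #B + #F' = #F := card_filter_add_card_filter_not _
  rw [show F.biUnion id = B.biUnion id ∪ F'.biUnion id by
    rw [← union_biUnion, filter_union_filter_not_eq], card_union_of_disjoint hdisj]
  omega

end Finset

lemma Nat.seven_add_le_mul_self_of_le_two_mul {n d k : ℕ} (hn : 13 ≤ n) (hk : n + 1 ≤ 2 * k)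
    (hkd : k ≤ d) (hd : d < n) :
    7 + d + 3 * ((d - k) * (d - k + 1)) + d * (n - d - 1) ≤ d * d := by
  obtain ⟨s, rfl⟩ := Nat.exists_eq_add_of_le hkd
  obtain ⟨m, rfl⟩ := Nat.exists_eq_add_of_lt hd
  simp only [Nat.add_sub_cancel_left, show k + s + m + 1 - (k + s) - 1 = m by omega]
  nlinarith

namespace IsRainbowTri

variable {V : Type*} {G : SimpleGraph V} {c : Sym2 V → ℕ} {u v w : V}

lemma ne (h : IsRainbowTri G c u v w) : u ≠ v ∧ u ≠ w ∧ v ≠ w :=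
  ⟨h.1.ne, h.2.1.ne, h.2.2.1.ne⟩

lemma rotate (h : IsRainbowTri G c u v w) : IsRainbowTri G c v w u := by
  obtain ⟨huv, huw, hvw, h₁, h₂, h₃⟩ := h
  have e₁ : s(v, u) = s(u, v) := Sym2.eq_swap
  have e₂ : s(w, u) = s(u, w) := Sym2.eq_swap
  exact ⟨hvw, huv.symm, huw.symm, e₁ ▸ h₂.symm, e₂ ▸ h₃.symm, e₁ ▸ e₂ ▸ h₁⟩

variable [DecidableEq V]

lemma card_eq_three (h : IsRainbowTri G c u v w) : #({u, v, w} : Finset V) = 3 :=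
  Finset.card_eq_three.mpr ⟨u, v, w, h.ne.1, h.ne.2.1, h.ne.2.2, rfl⟩

lemma exists_apex (h : IsRainbowTri G c u v w) {z : V} (hz : z ∈ ({u, v, w} : Finset V)) :
    ∃ x y, ({u, v, w} : Finset V) = {z, x, y} ∧ IsRainbowTri G c z x y := by
  simp only [mem_insert, mem_singleton] at hz
  rcases hz with rfl | rfl | rfl
  · exact ⟨v, w, rfl, h⟩
  · exact ⟨w, u, by ext; simp only [mem_insert, mem_singleton]; tauto, h.rotate⟩
  · exact ⟨u, v, by ext; simp only [mem_insert, mem_singleton]; tauto, h.rotate.rotate⟩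

end IsRainbowTri

namespace SimpleGraph

variable {V : Type*} [Fintype V] (G : SimpleGraph V) [DecidableRel G.Adj] (c : Sym2 V → ℕ)

instance (u v w : V) : Decidable (IsRainbowTri G c u v w) := by
  unfold IsRainbowTri; infer_instance

def sameColorPairs (v : V) : Finset (V × V) :=
  {p ∈ (G.neighborFinset v).offDiag | c s(v, p.1) = c s(v, p.2)}

def rainbowPairs (v : V) : Finset (V × V) := {p | IsRainbowTri G c v p.1 p.2}

def nonAdjPairs (v : V) : Finset (V × V) :=
  {p ∈ (G.neighborFinset v).offDiag | ¬ G.Adj p.1 p.2}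

def sameColorAtFstPairs (v : V) : Finset (V × V) :=
  {p ∈ (G.neighborFinset v).offDiag | G.Adj p.1 p.2 ∧ c s(p.1, p.2) = c s(v, p.1)}

lemma colorDeg_eq_card_image (v : V) :
    colorDeg G c v = #((G.neighborFinset v).image fun u => c s(v, u)) := by
  rw [colorDeg, ← Set.ncard_coe_finset]
  congr 1
  ext β
  simp

lemma colorDeg_le_degree (v : V) : colorDeg G c v ≤ G.degree v := by
  rw [colorDeg_eq_card_image, ← card_neighborFinset_eq_degree]
  exact card_image_le

lemma card_sameColorPairs_le (v : V) :
    #(G.sameColorPairs c v) ≤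
      (G.degree v - colorDeg G c v) * (G.degree v - colorDeg G c v + 1) := by
  rw [colorDeg_eq_card_image, ← card_neighborFinset_eq_degree]
  exact card_offDiag_filter_eq_le (G.neighborFinset v) fun u => c s(v, u)

lemma sum_card_sameColorAtFstPairs_le :
    ∑ v, #(G.sameColorAtFstPairs c v) ≤ ∑ v, #(G.sameColorPairs c v) := by
  refine sum_card_le_sum_card_of_rotate fun v x y h => ?_
  simp only [sameColorAtFstPairs, sameColorPairs, mem_filter, mem_offDiag,
    mem_neighborFinset] at h ⊢
  obtain ⟨⟨hvx, hvy, -⟩, hxy, hc⟩ := h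
  exact ⟨⟨hvx.symm, hxy, hvy.ne⟩, by rw [Sym2.eq_swap, hc]⟩

variable [DecidableEq V]

lemma card_offDiag_neighborFinset_le (v : V) :
    #(G.neighborFinset v).offDiag ≤ #(G.sameColorPairs c v) + #(G.rainbowPairs c v) +
      #(G.nonAdjPairs v) + 2 * #(G.sameColorAtFstPairs c v) := by
  set N := G.neighborFinset v
  set sameColorAtSnd := {p ∈ N.offDiag | G.Adj p.1 p.2 ∧ c s(p.1, p.2) = c s(v, p.2)}
  have hswap : #sameColorAtSnd = #(G.sameColorAtFstPairs c v) := by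
    refine card_nbij' (Prod.swap : V × V → V × V) Prod.swap ?_ ?_ (fun _ _ => rfl)
      (fun _ _ => rfl) <;>
    · rintro ⟨x, y⟩ h
      simp only [sameColorAtSnd, sameColorAtFstPairs, coe_filter, mem_offDiag, Set.mem_ofPred_eq,
        Prod.fst_swap, Prod.snd_swap, Sym2.eq_swap (a := y)] at h ⊢
      exact ⟨⟨h.1.2.1, h.1.1, h.1.2.2.symm⟩, h.2.1.symm, h.2.2⟩
  have hcover : N.offDiag ⊆ G.sameColorPairs c v ∪ G.rainbowPairs c v ∪ G.nonAdjPairs v ∪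
      G.sameColorAtFstPairs c v ∪ sameColorAtSnd := by
    rintro ⟨x, y⟩ hp
    have hx : G.Adj v x := (G.mem_neighborFinset v x).mp (mem_offDiag.mp hp).1
    have hy : G.Adj v y := (G.mem_neighborFinset v y).mp (mem_offDiag.mp hp).2.1
    simp only [sameColorPairs, rainbowPairs, nonAdjPairs, sameColorAtFstPairs, sameColorAtSnd,
      mem_union, mem_filter, mem_univ, hp, true_and]
    unfold IsRainbowTri
    tauto
  calc #N.offDiag ≤ #(G.sameColorPairs c v ∪ G.rainbowPairs c v ∪ G.nonAdjPairs v ∪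
        G.sameColorAtFstPairs c v ∪ sameColorAtSnd) := card_le_card hcover
    _ ≤ _ := by
      grind [card_union_le]

lemma sum_card_nonAdjPairs_le :
    ∑ v, #(G.nonAdjPairs v) ≤ ∑ v, G.degree v * (Fintype.card V - G.degree v - 1) := by
  calc ∑ v, #(G.nonAdjPairs v)
      ≤ ∑ x, #(G.neighborFinset x ×ˢ (insert x (G.neighborFinset x))ᶜ) := by
        refine sum_card_le_sum_card_of_rotate fun v x y h => ?_
        simp only [nonAdjPairs, mem_filter, mem_offDiag, mem_neighborFinset] at h
        simp only [mem_product, mem_compl, mem_insert, mem_neighborFinset]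
        exact ⟨h.1.1.symm, by rintro (rfl | hxy) <;> tauto⟩
    _ = ∑ v, G.degree v * (Fintype.card V - G.degree v - 1) := by
        simp [card_product, card_compl]

lemma seven_mul_card_le_sum_card_rainbowPairs (hn : 13 ≤ Fintype.card V)
    (hδ : ∀ v, Fintype.card V + 1 ≤ 2 * colorDeg G c v) :
    7 * Fintype.card V ≤ ∑ v, #(G.rainbowPairs c v) := by
  have hvertex : ∀ v, 7 + 2 * #(G.sameColorPairs c v) +
      G.degree v * (Fintype.card V - G.degree v - 1) ≤
        #(G.rainbowPairs c v) + #(G.nonAdjPairs v) + 2 * #(G.sameColorAtFstPairs c v) := by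
    intro v
    have := Nat.seven_add_le_mul_self_of_le_two_mul hn (hδ v) (G.colorDeg_le_degree c v)
      (G.degree_lt_card_verts v)
    have := G.card_sameColorPairs_le c v
    have := G.card_offDiag_neighborFinset_le c v
    rw [offDiag_card, card_neighborFinset_eq_degree] at this
    omega
  have hsum := sum_le_sum fun v (_ : v ∈ univ) => hvertex v
  simp only [sum_add_distrib, ← mul_sum, sum_const, card_univ, smul_eq_mul] at hsum
  have := G.sum_card_nonAdjPairs_le
  have := G.sum_card_sameColorAtFstPairs_le c
  omega

def rainbowTriangles : Finset (Finset V) :=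
  (univ.sigma (G.rainbowPairs c)).image fun t => {t.1, t.2.1, t.2.2}

variable {G c} in
lemma mem_rainbowTriangles {S : Finset V} :
    S ∈ G.rainbowTriangles c ↔ ∃ u v w, IsRainbowTri G c u v w ∧ {u, v, w} = S := by
  simp [rainbowTriangles, rainbowPairs]

lemma rainbowTriangles_sized : (G.rainbowTriangles c : Set (Finset V)).Sized 3 := by
  intro S hS
  obtain ⟨u, v, w, h, rfl⟩ := mem_rainbowTriangles.mp hS
  exact h.card_eq_three

lemma sum_card_rainbowPairs_le : ∑ v, #(G.rainbowPairs c v) ≤ 6 * #(G.rainbowTriangles c) := by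
  rw [← card_sigma]
  refine card_le_mul_card_image _ 6 fun S hS => ?_
  obtain ⟨u, v, w, h, rfl⟩ := mem_rainbowTriangles.mp hS
  -- an ordered triangle is determined by its first two vertices
  calc _ ≤ #({u, v, w} : Finset V).offDiag := by
        refine card_le_card_of_injOn (fun t => (t.1, t.2.1)) ?_ ?_
        · rintro ⟨a, b, d⟩ ht
          simp only [coe_filter, mem_sigma, mem_univ, true_and, rainbowPairs, mem_filter,
            Set.mem_ofPred_eq] at ht
          rw [← ht.2]
          simp [ht.1.ne.1]
        · rintro ⟨a, b, d⟩ ht ⟨a', b', d'⟩ ht' he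
          simp only [coe_filter, mem_sigma, mem_univ, true_and, rainbowPairs, mem_filter,
            Set.mem_ofPred_eq] at ht ht' he
          obtain ⟨rfl, rfl⟩ := Prod.mk.inj he
          have hd : d ∈ ({a, b, d'} : Finset V) := ht'.2 ▸ ht.2 ▸ by simp
          simp only [mem_insert, mem_singleton, ht.1.ne.2.1.symm, ht.1.ne.2.2.symm,
            false_or] at hd
          rw [hd]
    _ = 6 := by rw [offDiag_card, h.card_eq_three]

variable {G c} in
lemma exists_rainbowTri_pair_of_card_inter_eq_one {S S' : Finset V}
    (hS : S ∈ G.rainbowTriangles c) (hS' : S' ∈ G.rainbowTriangles c) (h : #(S ∩ S') = 1) :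
    ∃ v x₁ y₁ x₂ y₂ : V,
      x₁ ≠ y₁ ∧ x₁ ≠ x₂ ∧ x₁ ≠ y₂ ∧ y₁ ≠ x₂ ∧ y₁ ≠ y₂ ∧ x₂ ≠ y₂ ∧
      IsRainbowTri G c v x₁ y₁ ∧ IsRainbowTri G c v x₂ y₂ := by
  obtain ⟨z, hz⟩ := card_eq_one.mp h
  have hzS : z ∈ S ∩ S' := hz ▸ mem_singleton_self z
  obtain ⟨u, v, w, huvw, rfl⟩ := mem_rainbowTriangles.mp hS
  obtain ⟨u', v', w', huvw', rfl⟩ := mem_rainbowTriangles.mp hS'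
  obtain ⟨x₁, y₁, hS, h₁⟩ := huvw.exists_apex (mem_inter.mp hzS).1
  obtain ⟨x₂, y₂, hS', h₂⟩ := huvw'.exists_apex (mem_inter.mp hzS).2
  rw [hS, hS'] at hz
  have hout : ∀ a ∈ ({x₁, y₁} : Finset V), a ∉ ({z, x₂, y₂} : Finset V) := by
    intro a ha ha'
    have : a ∈ ({z, x₁, y₁} : Finset V) ∩ {z, x₂, y₂} :=
      mem_inter.mpr ⟨mem_insert_of_mem ha, ha'⟩
    rw [hz, mem_singleton] at this
    simp only [mem_insert, mem_singleton] at ha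
    rcases ha with rfl | rfl
    exacts [h₁.ne.1 this.symm, h₁.ne.2.1 this.symm]
  simp only [mem_insert, mem_singleton, forall_eq_or_imp, forall_eq, not_or] at hout
  exact ⟨z, x₁, y₁, x₂, y₂, h₁.ne.2.2, hout.1.2.1, hout.1.2.2, hout.2.2.1, hout.2.2.2,
    h₂.ne.2.2, h₁, h₂⟩

end SimpleGraph

/-- If `n ≥ 13` and `δ^c(G) ≥ (n+1)/2` then `G` contains two rainbow triangles
sharing exactly one common vertex. -/
theorem statement2 {V : Type*} [Fintype V] (G : SimpleGraph V) (c : Sym2 V → ℕ)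
    (hn : 13 ≤ Fintype.card V)
    (hδ : ∀ v : V, Fintype.card V + 1 ≤ 2 * colorDeg G c v) :
    ∃ v x₁ y₁ x₂ y₂ : V,
      x₁ ≠ y₁ ∧ x₁ ≠ x₂ ∧ x₁ ≠ y₂ ∧ y₁ ≠ x₂ ∧ y₁ ≠ y₂ ∧ x₂ ≠ y₂ ∧
      IsRainbowTri G c v x₁ y₁ ∧ IsRainbowTri G c v x₂ y₂ := by
  classical
  by_contra hno
  have hpair : (G.rainbowTriangles c : Set (Finset V)).Pairwise fun S S' => #(S ∩ S') ≠ 1 :=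
    fun S hS S' hS' _ h => hno (SimpleGraph.exists_rainbowTri_pair_of_card_inter_eq_one hS hS' h)
  have hfew : #(G.rainbowTriangles c) ≤ Fintype.card V :=
    (card_le_card_biUnion_of_sized_three (G.rainbowTriangles_sized c) hpair).trans
      (card_le_univ _)
  have hmany := G.seven_mul_card_le_sum_card_rainbowPairs c hn hδ
  have hsix := G.sum_card_rainbowPairs_le c
  omega
end

section
/- Let k ≥ 2 be an integer and let G be an edge-colored graph on n ≥ 3k−2 vertices. If δ^c(G) ≥ (n+k−1)/2, then G contains k rainbow triangles sharing one common edge. -/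
set_option linter.unusedSectionVars false
open Finset

section RT3

variable {V : Type*} [Fintype V] [DecidableEq V]

/-- concentration bound for sums of squares of positive integers -/
lemma rt3_sum_sq_le {ι : Type*} (s : Finset ι) (f : ι → ℤ)
    (hf : ∀ a ∈ s, 1 ≤ f a) :
    ∑ a ∈ s, f a ^ 2 ≤ (∑ a ∈ s, f a - s.card + 1) ^ 2 + s.card - 1 := by
  classical
  induction s using Finset.induction_on with
  | empty => simp
  | @insert a s ha ih =>
    have hfa : 1 ≤ f a := hf a (mem_insert_self a s)
    have hfs : ∀ b ∈ s, 1 ≤ f b := fun b hb => hf b (mem_insert_of_mem hb)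
    have ihs := ih hfs
    have hS : (s.card : ℤ) ≤ ∑ b ∈ s, f b := by
      calc (s.card : ℤ) = ∑ _b ∈ s, (1 : ℤ) := by simp
      _ ≤ ∑ b ∈ s, f b := Finset.sum_le_sum hfs
    rw [Finset.sum_insert ha, Finset.sum_insert ha, Finset.card_insert_of_notMem ha]
    push_cast
    set x := f a
    set S := ∑ b ∈ s, f b
    set t := (s.card : ℤ)
    nlinarith [mul_nonneg (sub_nonneg.2 hfa) (sub_nonneg.2 hS)]

/-- per-vertex algebraic inequality -/
lemma rt3_algebra (n k a x Q : ℤ) (hk : 2 ≤ k) (hn : 3 * k - 2 ≤ n)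
    (hax : a ≤ x) (hxn : x ≤ n - 1) (hda : n + k - 1 ≤ 2 * a)
    (hQx : x ≤ Q) (hQub : Q ≤ (x - a + 1) ^ 2 + a - 1) :
    0 ≤ 2 * x ^ 2 + 4 * x - (n + k) * x - 3 * Q ∧
      (2 * x ^ 2 + 4 * x - (n + k) * x - 3 * Q = 0 →
        x = a ∧ 2 * x = n + k - 1 ∧ Q = x) := by
  rcases eq_or_lt_of_le hax with h | h
  · -- a = x
    have hQ : Q = x := by nlinarith [h, hQub, hQx]
    have hx0 : 0 < x := by nlinarith
    constructor
    · nlinarith [hQ, hda, hx0, h]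
    · intro h0
      have h2 : x * (2 * x - (n + k - 1)) = 0 := by linear_combination h0 + 3 * hQ
      rcases mul_eq_zero.1 h2 with h3 | h3
      · omega
      · exact ⟨h.symm, by linarith, hQ⟩
  · have h1 : 1 ≤ 2 * x ^ 2 + 4 * x - (n + k) * x - 3 * Q := by
      nlinarith [mul_nonneg (by nlinarith : (0:ℤ) ≤ x - a - 1) (by nlinarith : (0:ℤ) ≤ n - 1 - x),
        mul_nonneg (by nlinarith : (0:ℤ) ≤ 2 * a - n - k + 1) (by nlinarith : (0:ℤ) ≤ n - 1 - x),
        mul_nonneg (by nlinarith : (0:ℤ) ≤ x - a) (by nlinarith : (0:ℤ) ≤ n - 1 - x),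
        mul_nonneg (by nlinarith : (0:ℤ) ≤ 2 * a - n - k + 1) (by nlinarith : (0:ℤ) ≤ x - a),
        sq_nonneg (x - a), sq_nonneg (n - 1 - x), sq_nonneg (2*k - 3)]
    constructor
    · linarith
    · intro h0; omega

variable (G : SimpleGraph V) (c : Sym2 V → ℕ)

variable [DecidableRel G.Adj]

/-- multiplicity of color α at vertex v -/
def rt3m (v : V) (α : ℕ) : ℕ := ((G.neighborFinset v).filter fun w => c s(v, w) = α).card

/-- set of colors at v -/
def rt3cols (v : V) : Finset ℕ := (G.neighborFinset v).image fun w => c s(v, w)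

lemma rt3_colorDeg_eq (v : V) : colorDeg G c v = (rt3cols G c v).card := by
  have : {β : ℕ | ∃ u, G.Adj v u ∧ c s(v, u) = β} = ↑(rt3cols G c v) := by
    ext β
    simp [rt3cols, SimpleGraph.mem_neighborFinset]
  rw [colorDeg, this, Set.ncard_coe_finset]

lemma rt3_sum_m (v : V) : ∑ α ∈ rt3cols G c v, rt3m G c v α = G.degree v := by
  simp only [rt3m, SimpleGraph.degree, rt3cols]
  exact (Finset.card_eq_sum_card_fiberwise (fun x hx => Finset.mem_image_of_mem _ hx)).symm

lemma rt3_m_pos {v : V} {α : ℕ} (h : α ∈ rt3cols G c v) : 1 ≤ rt3m G c v α := by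
  rw [rt3cols, Finset.mem_image] at h
  obtain ⟨w, hw, hc⟩ := h
  have : w ∈ (G.neighborFinset v).filter fun w => c s(v, w) = α :=
    Finset.mem_filter.2 ⟨hw, hc⟩
  exact Finset.card_pos.2 ⟨w, this⟩

lemma rt3_cols_card_le (v : V) : (rt3cols G c v).card ≤ G.degree v :=
  Finset.card_image_le

/-- the Q-quantity: sum of squares of multiplicities -/
def rt3Q (v : V) : ℕ := ∑ α ∈ rt3cols G c v, rt3m G c v α * rt3m G c v α

lemma rt3_sum_m_comp (v : V) :
    ∑ w ∈ G.neighborFinset v, rt3m G c v (c s(v, w)) = rt3Q G c v := by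
  rw [rt3Q]
  rw [Finset.sum_comp (fun α => rt3m G c v α) (fun w => c s(v, w))]
  rw [rt3cols]
  apply Finset.sum_congr rfl
  intro α hα
  rw [smul_eq_mul, rt3m]

end RT3

section RT3b

variable {V : Type*} [Fintype V] [DecidableEq V] (G : SimpleGraph V) (c : Sym2 V → ℕ)
variable [DecidableRel G.Adj]

/-- swapping a double sum over adjacent pairs -/
lemma rt3_sum_nbr_comm (f : V → V → ℕ) :
    ∑ u, ∑ v ∈ G.neighborFinset u, f u v = ∑ v, ∑ u ∈ G.neighborFinset v, f u v := by
  have L : ∑ u, ∑ v ∈ G.neighborFinset u, f u v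
      = ∑ u, ∑ v, if G.Adj u v then f u v else 0 := by
    apply Finset.sum_congr rfl; intro u _
    rw [SimpleGraph.neighborFinset_eq_filter, Finset.sum_filter]
  have R : ∑ v, ∑ u ∈ G.neighborFinset v, f u v
      = ∑ v, ∑ u, if G.Adj v u then f u v else 0 := by
    apply Finset.sum_congr rfl; intro v _
    rw [SimpleGraph.neighborFinset_eq_filter, Finset.sum_filter]
  rw [L, R, Finset.sum_comm]
  apply Finset.sum_congr rfl; intro v _
  apply Finset.sum_congr rfl; intro u _
  congr 1
  simp [SimpleGraph.adj_comm]

/-- bad count for an (ordered) edge -/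
def rt3bad (u v : V) : ℕ :=
  ((G.neighborFinset u ∩ G.neighborFinset v).filter fun w => c s(u, w) = c s(v, w)).card

/-- total bad count bound: Bsum + Dsum ≤ ∑ Q -/
lemma rt3_bad_sum :
    (∑ u, ∑ v ∈ G.neighborFinset u, rt3bad G c u v) + (∑ w, G.degree w)
      ≤ ∑ w, rt3Q G c w := by
  classical
  set F : V → V → V → ℕ := fun u v w =>
    if G.Adj w u ∧ G.Adj w v ∧ u ≠ v ∧ c s(w, u) = c s(w, v) then 1 else 0 with hF
  -- step 1 : per edge bound
  have step1 : ∀ u v : V, G.Adj u v → rt3bad G c u v ≤ ∑ w, F u v w := by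
    intro u v huv
    rw [rt3bad, Finset.card_filter]
    calc ∑ w ∈ G.neighborFinset u ∩ G.neighborFinset v,
          (if c s(u, w) = c s(v, w) then 1 else 0)
        ≤ ∑ w ∈ G.neighborFinset u ∩ G.neighborFinset v, F u v w := by
          apply Finset.sum_le_sum
          intro w hw
          rw [Finset.mem_inter, SimpleGraph.mem_neighborFinset,
            SimpleGraph.mem_neighborFinset] at hw
          by_cases hcw : c s(u, w) = c s(v, w)
          · simp only [hcw, if_true, hF]
            have hc : G.Adj w u ∧ G.Adj w v ∧ u ≠ v ∧ c s(w, u) = c s(w, v) := by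
              refine ⟨hw.1.symm, hw.2.symm, huv.ne, ?_⟩
              rwa [Sym2.eq_swap (a := w) (b := u), Sym2.eq_swap (a := w) (b := v)]
            rw [if_pos hc]
          · simp [hcw]
      _ ≤ ∑ w, F u v w := by
          apply Finset.sum_le_sum_of_subset (Finset.subset_univ _)
  -- step 2 : extend v to univ and swap
  have step2 : (∑ u, ∑ v ∈ G.neighborFinset u, rt3bad G c u v)
      ≤ ∑ w, ∑ u, ∑ v, F u v w := by
    calc ∑ u, ∑ v ∈ G.neighborFinset u, rt3bad G c u v
        ≤ ∑ u, ∑ v ∈ G.neighborFinset u, ∑ w, F u v w := by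
          apply Finset.sum_le_sum; intro u _
          apply Finset.sum_le_sum; intro v hv
          exact step1 u v ((SimpleGraph.mem_neighborFinset _ _ _).1 hv)
      _ ≤ ∑ u, ∑ v, ∑ w, F u v w := by
          apply Finset.sum_le_sum; intro u _
          exact Finset.sum_le_sum_of_subset (Finset.subset_univ _)
      _ = ∑ u, ∑ w, ∑ v, F u v w := by
          apply Finset.sum_congr rfl; intro u _
          rw [Finset.sum_comm]
      _ = ∑ w, ∑ u, ∑ v, F u v w := Finset.sum_comm
  -- step 3 : per-w bound
  have step3 : ∀ w : V, (∑ u, ∑ v, F u v w) + G.degree w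
      ≤ ∑ u ∈ G.neighborFinset w, rt3m G c w (c s(w, u)) := by
    intro w
    have hzero : ∀ u ∈ (univ : Finset V), u ∉ G.neighborFinset w → (∑ v, F u v w) = 0 := by
      intro u _ hu
      apply Finset.sum_eq_zero
      intro v _
      have hno : ¬ (G.Adj w u ∧ G.Adj w v ∧ u ≠ v ∧ c s(w, u) = c s(w, v)) := by
        intro hcon
        exact hu ((SimpleGraph.mem_neighborFinset _ _ _).2 hcon.1)
      show F u v w = 0
      rw [hF]
      exact if_neg hno
    have hres : (∑ u, ∑ v, F u v w) = ∑ u ∈ G.neighborFinset w, ∑ v, F u v w :=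
      (Finset.sum_subset (Finset.subset_univ _) hzero).symm
    have hdeg : G.degree w = ∑ _u ∈ G.neighborFinset w, 1 := by
      rw [SimpleGraph.degree, Finset.card_eq_sum_ones]
    rw [hres, hdeg, ← Finset.sum_add_distrib]
    apply Finset.sum_le_sum
    intro u hu
    have huw : G.Adj w u := (SimpleGraph.mem_neighborFinset _ _ _).1 hu
    have hval : (∑ v, F u v w) = (univ.filter
        (fun v => G.Adj w u ∧ G.Adj w v ∧ u ≠ v ∧ c s(w, u) = c s(w, v))).card := by
      rw [Finset.card_filter]
    have hsub : univ.filter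
        (fun v => G.Adj w u ∧ G.Adj w v ∧ u ≠ v ∧ c s(w, u) = c s(w, v))
        ⊆ ((G.neighborFinset w).filter fun v => c s(w, v) = c s(w, u)).erase u := by
      intro v hv
      rw [Finset.mem_filter] at hv
      obtain ⟨-, -, hwv, huv, hcc⟩ := hv
      rw [Finset.mem_erase, Finset.mem_filter]
      exact ⟨huv.symm, (SimpleGraph.mem_neighborFinset _ _ _).2 hwv, hcc.symm⟩
    have hmem : u ∈ (G.neighborFinset w).filter fun v => c s(w, v) = c s(w, u) :=
      Finset.mem_filter.2 ⟨(SimpleGraph.mem_neighborFinset _ _ _).2 huw, rfl⟩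
    have hcard := Finset.card_erase_of_mem hmem
    have hle := Finset.card_le_card hsub
    have hpos := Finset.card_pos.2 ⟨u, hmem⟩
    have hrt : rt3m G c w (c s(w, u))
        = ((G.neighborFinset w).filter fun v => c s(w, v) = c s(w, u)).card := rfl
    omega
  -- assemble
  calc (∑ u, ∑ v ∈ G.neighborFinset u, rt3bad G c u v) + (∑ w, G.degree w)
      ≤ (∑ w, ∑ u, ∑ v, F u v w) + (∑ w, G.degree w) := by
        exact Nat.add_le_add_right step2 _
    _ = ∑ w, ((∑ u, ∑ v, F u v w) + G.degree w) := by
        rw [Finset.sum_add_distrib]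
    _ ≤ ∑ w, ∑ u ∈ G.neighborFinset w, rt3m G c w (c s(w, u)) :=
        Finset.sum_le_sum fun w _ => step3 w
    _ = ∑ w, rt3Q G c w := Finset.sum_congr rfl fun w _ => rt3_sum_m_comp G c w

end RT3b

section RT3c

variable {V : Type*} [Fintype V] [DecidableEq V] (G : SimpleGraph V) (c : Sym2 V → ℕ)
variable [DecidableRel G.Adj]

instance rt3dec (u v : V) : DecidablePred (fun w => IsRainbowTri G c u v w) := fun w => by
  unfold IsRainbowTri; infer_instance

/-- the per-edge inequality -/
lemma rt3_edge (k : ℕ) {u v : V} (huv : G.Adj u v)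
    (hcap : (univ.filter (fun w => IsRainbowTri G c u v w)).card + 1 ≤ k) :
    G.degree u + G.degree v + 3 ≤ Fintype.card V + k
      + rt3m G c u (c s(u, v)) + rt3m G c v (c s(u, v)) + rt3bad G c u v := by
  set γ := c s(u, v) with hγ
  set A := (G.neighborFinset u).filter (fun w => ¬ c s(u, w) = γ) with hA
  set B := (G.neighborFinset v).filter (fun w => ¬ c s(v, w) = γ) with hB
  have hAc : rt3m G c u γ + A.card = G.degree u := by
    rw [rt3m, hA, ← SimpleGraph.card_neighborFinset_eq_degree]
    exact Finset.card_filter_add_card_filter_not _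
  have hBc : rt3m G c v γ + B.card = G.degree v := by
    rw [rt3m, hB, ← SimpleGraph.card_neighborFinset_eq_degree]
    exact Finset.card_filter_add_card_filter_not _
  have hsub : A ∪ B ⊆ univ \ ({u, v} : Finset V) := by
    intro w hw
    rw [Finset.mem_sdiff, Finset.mem_insert, Finset.mem_singleton]
    refine ⟨Finset.mem_univ _, ?_⟩
    rintro (rfl | rfl)
    · rcases Finset.mem_union.1 hw with h | h
      · exact (G.irrefl ((SimpleGraph.mem_neighborFinset _ _ _).1 (Finset.mem_filter.1 h).1))
      · exact (Finset.mem_filter.1 h).2 (by rw [hγ, Sym2.eq_swap])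
    · rcases Finset.mem_union.1 hw with h | h
      · exact (Finset.mem_filter.1 h).2 rfl
      · exact (G.irrefl ((SimpleGraph.mem_neighborFinset _ _ _).1 (Finset.mem_filter.1 h).1))
  have h1 : (A ∪ B).card + 2 ≤ Fintype.card V := by
    have := Finset.card_le_card hsub
    have h2 := Finset.card_sdiff_add_card_eq_card (Finset.subset_univ ({u, v} : Finset V))
    rw [Finset.card_pair huv.ne, Finset.card_univ] at h2
    omega
  have h2 := Finset.card_union_add_card_inter A B
  have h3 : (A ∩ B).card ≤ rt3bad G c u v
      + (univ.filter (fun w => IsRainbowTri G c u v w)).card := by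
    have hsplit := Finset.card_filter_add_card_filter_not
      (s := A ∩ B) (p := fun w => c s(u, w) = c s(v, w))
    have hb : (A ∩ B).filter (fun w => c s(u, w) = c s(v, w))
        ⊆ (G.neighborFinset u ∩ G.neighborFinset v).filter
          (fun w => c s(u, w) = c s(v, w)) := by
      apply Finset.filter_subset_filter
      exact Finset.inter_subset_inter (Finset.filter_subset _ _) (Finset.filter_subset _ _)
    have hr : (A ∩ B).filter (fun w => ¬ c s(u, w) = c s(v, w))
        ⊆ univ.filter (fun w => IsRainbowTri G c u v w) := by
      intro w hw
      rw [Finset.mem_filter] at hw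
      obtain ⟨hwAB, hne⟩ := hw
      rw [Finset.mem_inter] at hwAB
      obtain ⟨hwA, hwB⟩ := hwAB
      rw [hA, Finset.mem_filter, SimpleGraph.mem_neighborFinset] at hwA
      rw [hB, Finset.mem_filter, SimpleGraph.mem_neighborFinset] at hwB
      rw [Finset.mem_filter]
      exact ⟨Finset.mem_univ _,
        huv, hwA.1, hwB.1, fun h => hwA.2 h.symm, fun h => hwB.2 h.symm, hne⟩
    have hbc := Finset.card_le_card hb
    have hrc := Finset.card_le_card hr
    rw [rt3bad]
    omega
  omega

end RT3c

section RT3d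

variable {V : Type*} [Fintype V] [DecidableEq V] (G : SimpleGraph V) (c : Sym2 V → ℕ)
variable [DecidableRel G.Adj]

/-- the master (summed) inequality -/
lemma rt3_master (k : ℕ)
    (hcap : ∀ u v : V, G.Adj u v →
      (univ.filter (fun w => IsRainbowTri G c u v w)).card + 1 ≤ k) :
    2 * (∑ v, G.degree v * G.degree v) + 4 * (∑ v, G.degree v)
      ≤ (Fintype.card V + k) * (∑ v, G.degree v) + 3 * (∑ v, rt3Q G c v) := by
  have hsum : ∑ u, ∑ v ∈ G.neighborFinset u, (G.degree u + G.degree v + 3)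
      ≤ ∑ u, ∑ v ∈ G.neighborFinset u, ((Fintype.card V + k)
        + rt3m G c u (c s(u, v)) + rt3m G c v (c s(u, v)) + rt3bad G c u v) := by
    apply Finset.sum_le_sum; intro u _
    apply Finset.sum_le_sum; intro v hv
    have huv : G.Adj u v := (SimpleGraph.mem_neighborFinset _ _ _).1 hv
    exact rt3_edge G c k huv (hcap u v huv)
  -- LHS pieces
  have eL : ∑ u, ∑ v ∈ G.neighborFinset u, (G.degree u + G.degree v + 3)
      = (∑ u, G.degree u * G.degree u) + (∑ v, G.degree v * G.degree v)
        + 3 * (∑ u, G.degree u) := by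
    have l1 : ∀ u : V, ∑ v ∈ G.neighborFinset u, (G.degree u + G.degree v + 3)
        = G.degree u * G.degree u + (∑ v ∈ G.neighborFinset u, G.degree v)
          + 3 * G.degree u := by
      intro u
      rw [Finset.sum_add_distrib, Finset.sum_add_distrib, Finset.sum_const,
        Finset.sum_const, SimpleGraph.card_neighborFinset_eq_degree,
        smul_eq_mul, smul_eq_mul]
      ring
    rw [Finset.sum_congr rfl (fun u _ => l1 u), Finset.sum_add_distrib,
      Finset.sum_add_distrib, ← Finset.mul_sum]
    have l2 : ∑ u, ∑ v ∈ G.neighborFinset u, G.degree v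
        = ∑ v, G.degree v * G.degree v := by
      rw [rt3_sum_nbr_comm G (fun _ v => G.degree v)]
      apply Finset.sum_congr rfl
      intro v _
      rw [Finset.sum_const, SimpleGraph.card_neighborFinset_eq_degree, smul_eq_mul]
    rw [l2]
  -- RHS pieces
  have eR : ∑ u, ∑ v ∈ G.neighborFinset u, ((Fintype.card V + k)
        + rt3m G c u (c s(u, v)) + rt3m G c v (c s(u, v)) + rt3bad G c u v)
      = (Fintype.card V + k) * (∑ u, G.degree u) + (∑ u, rt3Q G c u)
        + (∑ v, rt3Q G c v)
        + (∑ u, ∑ v ∈ G.neighborFinset u, rt3bad G c u v) := by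
    have r1 : ∀ u : V, ∑ v ∈ G.neighborFinset u, ((Fintype.card V + k)
          + rt3m G c u (c s(u, v)) + rt3m G c v (c s(u, v)) + rt3bad G c u v)
        = (Fintype.card V + k) * G.degree u
          + (∑ v ∈ G.neighborFinset u, rt3m G c u (c s(u, v)))
          + (∑ v ∈ G.neighborFinset u, rt3m G c v (c s(u, v)))
          + (∑ v ∈ G.neighborFinset u, rt3bad G c u v) := by
      intro u
      rw [Finset.sum_add_distrib, Finset.sum_add_distrib, Finset.sum_add_distrib,
        Finset.sum_const, SimpleGraph.card_neighborFinset_eq_degree, smul_eq_mul]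
      ring
    rw [Finset.sum_congr rfl (fun u _ => r1 u), Finset.sum_add_distrib,
      Finset.sum_add_distrib, Finset.sum_add_distrib, ← Finset.mul_sum]
    have r2 : ∑ u, ∑ v ∈ G.neighborFinset u, rt3m G c u (c s(u, v))
        = ∑ u, rt3Q G c u :=
      Finset.sum_congr rfl (fun u _ => rt3_sum_m_comp G c u)
    have r3 : ∑ u, ∑ v ∈ G.neighborFinset u, rt3m G c v (c s(u, v))
        = ∑ v, rt3Q G c v := by
      rw [rt3_sum_nbr_comm G (fun u v => rt3m G c v (c s(u, v)))]
      apply Finset.sum_congr rfl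
      intro v _
      rw [← rt3_sum_m_comp G c v]
      apply Finset.sum_congr rfl
      intro u _
      rw [Sym2.eq_swap]
    rw [r2, r3]
  have hbad := rt3_bad_sum G c
  rw [eL, eR] at hsum
  omega

end RT3d

section RT3e

variable {V : Type*} [Fintype V] [DecidableEq V]

/-- colors at a vertex are pairwise distinct when multiplicities are all 1 -/
lemma rt3_distinct (G : SimpleGraph V) (c : Sym2 V → ℕ) [DecidableRel G.Adj]
    (hproper : ∀ v : V, ∀ α ∈ rt3cols G c v, rt3m G c v α = 1)
    {x a b : V} (hxa : G.Adj x a) (hxb : G.Adj x b) (hab : a ≠ b) :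
    c s(x, a) ≠ c s(x, b) := by
  intro heq
  have hmema : a ∈ (G.neighborFinset x).filter (fun w => c s(x, w) = c s(x, a)) :=
    Finset.mem_filter.2 ⟨(SimpleGraph.mem_neighborFinset _ _ _).2 hxa, rfl⟩
  have hmemb : b ∈ (G.neighborFinset x).filter (fun w => c s(x, w) = c s(x, a)) :=
    Finset.mem_filter.2 ⟨(SimpleGraph.mem_neighborFinset _ _ _).2 hxb, heq.symm⟩
  have h2 : 2 ≤ rt3m G c x (c s(x, a)) := by
    rw [rt3m]
    exact Finset.one_lt_card.2 ⟨a, hmema, b, hmemb, hab⟩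
  have hcol : c s(x, a) ∈ rt3cols G c x := by
    rw [rt3cols, Finset.mem_image]
    exact ⟨a, (SimpleGraph.mem_neighborFinset _ _ _).2 hxa, rfl⟩
  have := hproper x _ hcol
  omega

end RT3e

/-- If `k ≥ 2`, `n ≥ 3k-2` and `δ^c(G) ≥ (n+k-1)/2`, then `G` contains `k` rainbow
triangles sharing one common edge: an edge `uv` and `k` distinct vertices `w`,
each forming a rainbow triangle with `u` and `v`. -/
theorem statement3 {V : Type*} [Fintype V] [DecidableEq V]
    (G : SimpleGraph V) (c : Sym2 V → ℕ) (k : ℕ) (hk : 2 ≤ k)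
    (hn : 3 * k - 2 ≤ Fintype.card V)
    (hδ : ∀ v : V, Fintype.card V + k - 1 ≤ 2 * colorDeg G c v) :
    ∃ u v : V, G.Adj u v ∧
      ∃ W : Finset V, W.card = k ∧ ∀ w ∈ W, IsRainbowTri G c u v w := by
  classical
  letI : DecidableRel G.Adj := Classical.decRel _
  by_contra hcon
  set n := Fintype.card V with hndef
  -- every edge sees at most k-1 rainbow apexes
  have hcap : ∀ u v : V, G.Adj u v →
      (univ.filter (fun w => IsRainbowTri G c u v w)).card + 1 ≤ k := by
    intro u v huv
    by_contra hle
    push_neg at hle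
    obtain ⟨W, hWsub, hWcard⟩ := Finset.exists_subset_card_eq
      (show k ≤ (univ.filter (fun w => IsRainbowTri G c u v w)).card by omega)
    exact hcon ⟨u, v, huv, W, hWcard, fun w hw => (Finset.mem_filter.1 (hWsub hw)).2⟩
  -- per-vertex numeric facts
  have hδ' : ∀ v, n + k - 1 ≤ 2 * (rt3cols G c v).card := by
    intro v
    have := hδ v
    rwa [rt3_colorDeg_eq] at this
  have hQlb : ∀ v, G.degree v ≤ rt3Q G c v := by
    intro v
    rw [← rt3_sum_m G c v, rt3Q]
    apply Finset.sum_le_sum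
    intro α hα
    have := rt3_m_pos G c hα
    nlinarith
  have hQub : ∀ v, (rt3Q G c v : ℤ)
      ≤ ((G.degree v : ℤ) - (rt3cols G c v).card + 1) ^ 2 + (rt3cols G c v).card - 1 := by
    intro v
    have h := rt3_sum_sq_le (rt3cols G c v) (fun α => (rt3m G c v α : ℤ))
      (fun a ha => show (1:ℤ) ≤ (rt3m G c v a : ℤ) by exact_mod_cast rt3_m_pos G c ha)
    have h1 : ∑ α ∈ rt3cols G c v, ((rt3m G c v α : ℤ)) ^ 2 = (rt3Q G c v : ℤ) := by
      rw [rt3Q]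
      push_cast
      apply Finset.sum_congr rfl
      intro α _
      ring
    have h2 : ∑ α ∈ rt3cols G c v, ((rt3m G c v α : ℤ)) = (G.degree v : ℤ) := by
      rw [← rt3_sum_m G c v]
      push_cast
      rfl
    rw [h1, h2] at h
    exact h
  -- the per-vertex F-quantity
  set Fv : V → ℤ := fun v => 2 * (G.degree v : ℤ) ^ 2 + 4 * (G.degree v : ℤ)
    - ((n : ℤ) + k) * (G.degree v : ℤ) - 3 * (rt3Q G c v : ℤ) with hFv
  have halg : ∀ v, 0 ≤ Fv v ∧ (Fv v = 0 →
      ((G.degree v : ℤ) = (rt3cols G c v).card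
        ∧ 2 * (G.degree v : ℤ) = (n : ℤ) + k - 1
        ∧ (rt3Q G c v : ℤ) = (G.degree v : ℤ))) := by
    intro v
    have hdlt := G.degree_lt_card_verts v
    have hcle := rt3_cols_card_le G c v
    have hδv := hδ' v
    have hql := hQlb v
    have h := rt3_algebra (n : ℤ) (k : ℤ) ((rt3cols G c v).card : ℤ) ((G.degree v : ℤ))
      ((rt3Q G c v : ℤ)) (by exact_mod_cast hk) (by omega) (by exact_mod_cast hcle)
      (by omega) (by omega) (by exact_mod_cast hql) (hQub v)
    exact ⟨h.1, fun h0 => h.2 h0⟩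
  -- the master inequality gives ∑ Fv ≤ 0
  have hsumF : ∑ v, Fv v ≤ 0 := by
    have hm := rt3_master G c k hcap
    have hexp : ∑ v, Fv v
        = 2 * ((∑ v, G.degree v * G.degree v : ℕ) : ℤ)
          + 4 * ((∑ v, G.degree v : ℕ) : ℤ)
          - ((n : ℤ) + k) * ((∑ v, G.degree v : ℕ) : ℤ)
          - 3 * ((∑ v, rt3Q G c v : ℕ) : ℤ) := by
      rw [Finset.sum_sub_distrib, Finset.sum_sub_distrib, Finset.sum_add_distrib,
        ← Finset.mul_sum, ← Finset.mul_sum, ← Finset.mul_sum, ← Finset.mul_sum]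
      push_cast
      simp only [pow_two]
      try ring
    rw [hexp]
    have hmz : (2 * (∑ v, G.degree v * G.degree v) + 4 * (∑ v, G.degree v) : ℤ)
        ≤ ((n + k) * (∑ v, G.degree v) + 3 * (∑ v, rt3Q G c v) : ℕ) := by
      exact_mod_cast hm
    push_cast at hmz ⊢
    linarith
  -- hence every Fv is zero
  have hF0 : ∀ v, Fv v = 0 := by
    intro v
    by_contra h0
    have hpos : 0 < Fv v := lt_of_le_of_ne (halg v).1 (Ne.symm h0)
    have : 0 < ∑ v, Fv v :=
      Finset.sum_pos' (fun w _ => (halg w).1) ⟨v, Finset.mem_univ v, hpos⟩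
    linarith
  -- structural conclusions
  have hstruct : ∀ v, 2 * G.degree v = n + k - 1 ∧ rt3Q G c v = G.degree v := by
    intro v
    obtain ⟨h1, h2, h3⟩ := (halg v).2 (hF0 v)
    constructor
    · omega
    · exact_mod_cast h3
  -- coloring is proper
  have hproper : ∀ v : V, ∀ α ∈ rt3cols G c v, rt3m G c v α = 1 := by
    intro v
    have h1 : ∑ α ∈ rt3cols G c v, rt3m G c v α * rt3m G c v α
        = ∑ α ∈ rt3cols G c v, rt3m G c v α := by
      rw [rt3_sum_m]
      exact (hstruct v).2
    have h2 : ∀ α ∈ rt3cols G c v, rt3m G c v α ≤ rt3m G c v α * rt3m G c v α := by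
      intro α hα
      have := rt3_m_pos G c hα
      nlinarith
    intro α hα
    have h3 := (Finset.sum_eq_sum_iff_of_le h2).1 h1.symm α hα
    have := rt3_m_pos G c hα
    nlinarith
  -- every common neighbor of an edge is a rainbow apex
  have hcommon : ∀ u v : V, G.Adj u v →
      (G.neighborFinset u ∩ G.neighborFinset v)
        ⊆ univ.filter (fun w => IsRainbowTri G c u v w) := by
    intro u v huv w hw
    rw [Finset.mem_inter, SimpleGraph.mem_neighborFinset,
      SimpleGraph.mem_neighborFinset] at hw
    obtain ⟨huw, hvw⟩ := hw
    rw [Finset.mem_filter]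
    refine ⟨Finset.mem_univ _, huv, huw, hvw, ?_, ?_, ?_⟩
    · exact rt3_distinct G c hproper huv huw (fun h => G.irrefl (h ▸ hvw : G.Adj w w))
    · have := rt3_distinct G c hproper huv.symm hvw
        (fun h => G.irrefl (h ▸ huw : G.Adj w w))
      rwa [Sym2.eq_swap (a := v) (b := u)] at this
    · have := rt3_distinct G c hproper huw.symm hvw.symm huv.ne
      rwa [Sym2.eq_swap (a := w) (b := u), Sym2.eq_swap (a := w) (b := v)] at this
  -- for every edge, the two neighborhoods cover everything
  have hco : ∀ u v : V, G.Adj u v →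
      (G.neighborFinset u ∪ G.neighborFinset v) = univ := by
    intro u v huv
    have h1 := Finset.card_union_add_card_inter (G.neighborFinset u) (G.neighborFinset v)
    have h2 : (G.neighborFinset u ∩ G.neighborFinset v).card
        ≤ (univ.filter (fun w => IsRainbowTri G c u v w)).card :=
      Finset.card_le_card (hcommon u v huv)
    have h3 := hcap u v huv
    have h4 := Finset.card_le_univ (G.neighborFinset u ∪ G.neighborFinset v)
    rw [SimpleGraph.card_neighborFinset_eq_degree,
      SimpleGraph.card_neighborFinset_eq_degree] at h1
    have hd1 := (hstruct u).1
    have hd2 := (hstruct v).1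
    apply Finset.eq_univ_of_card
    omega
  -- pick a triangle
  have hnpos : 0 < n := by omega
  obtain ⟨v0⟩ : Nonempty V := Fintype.card_pos_iff.1 hnpos
  have hd0 := (hstruct v0).1
  have hdeg0 : 0 < G.degree v0 := by omega
  have hne0 : (G.neighborFinset v0).Nonempty := by
    rw [← Finset.card_pos, SimpleGraph.card_neighborFinset_eq_degree]
    exact hdeg0
  obtain ⟨v1, hv1⟩ := hne0
  have hadj01 : G.Adj v0 v1 := (SimpleGraph.mem_neighborFinset _ _ _).1 hv1
  have hintpos : 0 < (G.neighborFinset v0 ∩ G.neighborFinset v1).card := by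
    have h1 := Finset.card_union_add_card_inter (G.neighborFinset v0) (G.neighborFinset v1)
    rw [hco v0 v1 hadj01, Finset.card_univ, SimpleGraph.card_neighborFinset_eq_degree,
      SimpleGraph.card_neighborFinset_eq_degree] at h1
    have hd1 := (hstruct v1).1
    omega
  obtain ⟨v2, hv2⟩ := Finset.card_pos.1 hintpos
  rw [Finset.mem_inter, SimpleGraph.mem_neighborFinset,
    SimpleGraph.mem_neighborFinset] at hv2
  obtain ⟨hadj02, hadj12⟩ := hv2
  -- the three non-neighborhoods are pairwise disjoint
  set C : V → Finset V := fun x => univ \ G.neighborFinset x with hC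
  have hcC : ∀ x : V, (C x).card + G.degree x = n := by
    intro x
    rw [hndef, hC, ← SimpleGraph.card_neighborFinset_eq_degree, ← Finset.card_univ]
    exact Finset.card_sdiff_add_card_eq_card (Finset.subset_univ _)
  have hdisj : ∀ x y : V, G.Adj x y → Disjoint (C x) (C y) := by
    intro x y hxy
    rw [Finset.disjoint_left]
    intro w hwx hwy
    rw [hC, Finset.mem_sdiff] at hwx hwy
    have : w ∈ G.neighborFinset x ∪ G.neighborFinset y := by
      rw [hco x y hxy]; exact Finset.mem_univ w
    rcases Finset.mem_union.1 this with h | h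
    · exact hwx.2 h
    · exact hwy.2 h
  have hdisj3 : Disjoint (C v0 ∪ C v1) (C v2) := by
    rw [Finset.disjoint_union_left]
    exact ⟨hdisj v0 v2 hadj02, hdisj v1 v2 hadj12⟩
  have hcard3 : (C v0).card + (C v1).card + (C v2).card ≤ n := by
    have e1 := Finset.card_union_of_disjoint (hdisj v0 v1 hadj01)
    have e2 := Finset.card_union_of_disjoint hdisj3
    have := Finset.card_le_univ (C v0 ∪ C v1 ∪ C v2)
    omega
  have hd1 := (hstruct v1).1
  have hd2 := (hstruct v2).1
  have hc0 := hcC v0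
  have hc1 := hcC v1
  have hc2 := hcC v2
  omega
end

section
/- Let k ≥ 2 and let G be the complete tripartite graph with three parts each of size k−1, so G has n = 3k−3 vertices. Then: (1) G contains no B_k and no F_k; (2) every vertex of G has degree 2k−2 = (n+k−1)/2; (3) for any edge-coloring c of G in which any two adjacent edges receive distinct colors (a proper edge-coloring), every vertex has color degree d^c(v) = 2k−2, and the edge-colored graph contains neither k rainbow triangles sharing one common edge nor k rainbow triangles only sharing one common vertex. -/
lemma fin3_unique : ∀ a b c d : Fin 3, a ≠ b → c ≠ a → c ≠ b → d ≠ a → d ≠ b → c = d := by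
  decide

lemma filterCard {m : ℕ} (v1 : Fin 3) :
    (Finset.univ.filter (fun p : Fin 3 × Fin m => p.1 ≠ v1)).card = 2 * m := by
  have h : Finset.univ.filter (fun p : Fin 3 × Fin m => p.1 ≠ v1)
      = (Finset.univ.filter (fun a : Fin 3 => a ≠ v1)) ×ˢ (Finset.univ : Finset (Fin m)) := by
    ext p; simp [Finset.mem_filter]
  rw [h, Finset.card_product]
  have h2 : (Finset.univ.filter (fun a : Fin 3 => a ≠ v1)).card = 2 := by
    rw [Finset.filter_ne', Finset.card_erase_of_mem (Finset.mem_univ _)]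
    simp
  simp [h2]

lemma noBook {k : ℕ} (hk : 2 ≤ k) (G : SimpleGraph (Fin 3 × Fin (k - 1)))
    (hG : ∀ a b : Fin 3 × Fin (k - 1), G.Adj a b ↔ a.1 ≠ b.1) :
    ¬ ∃ (u v : Fin 3 × Fin (k - 1)) (W : Finset (Fin 3 × Fin (k - 1))),
        G.Adj u v ∧ W.card = k ∧ ∀ w ∈ W, G.Adj u w ∧ G.Adj v w := by
  rintro ⟨u, v, W, huv, hcard, hW⟩
  have huv1 : u.1 ≠ v.1 := (hG u v).1 huv
  have hinj : Set.InjOn Prod.snd (W : Set (Fin 3 × Fin (k - 1))) := by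
    intro a ha b hb hab
    have ha1 := hW a ha
    have hb1 := hW b hb
    have h1 : a.1 = b.1 :=
      fin3_unique u.1 v.1 a.1 b.1 huv1
        (Ne.symm ((hG u a).1 ha1.1)) (Ne.symm ((hG v a).1 ha1.2))
        (Ne.symm ((hG u b).1 hb1.1)) (Ne.symm ((hG v b).1 hb1.2))
    exact Prod.ext h1 hab
  have := Finset.card_le_card_of_injOn Prod.snd
    (fun a _ => Finset.mem_univ (a.2)) hinj
  simp [hcard] at this
  omega

lemma noFan {k : ℕ} (hk : 2 ≤ k) (G : SimpleGraph (Fin 3 × Fin (k - 1)))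
    (hG : ∀ a b : Fin 3 × Fin (k - 1), G.Adj a b ↔ a.1 ≠ b.1) :
    ¬ ∃ (v : Fin 3 × Fin (k - 1)) (x y : Fin k → Fin 3 × Fin (k - 1)),
        Function.Injective (Sum.elim x y) ∧
        ∀ i, G.Adj v (x i) ∧ G.Adj v (y i) := by
  rintro ⟨v, x, y, hinj, h⟩
  have hmap : ∀ s ∈ (Finset.univ : Finset (Fin k ⊕ Fin k)),
      Sum.elim x y s ∈ Finset.univ.filter (fun p : Fin 3 × Fin (k - 1) => p.1 ≠ v.1) := by
    rintro (i | i) _ <;> simp only [Sum.elim_inl, Sum.elim_inr, Finset.mem_filter,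
      Finset.mem_univ, true_and]
    · exact Ne.symm ((hG v (x i)).1 (h i).1)
    · exact Ne.symm ((hG v (y i)).1 (h i).2)
  have hle := Finset.card_le_card_of_injOn (Sum.elim x y) hmap (hinj.injOn)
  rw [filterCard] at hle
  simp at hle
  omega

lemma degSet {k : ℕ} (hk : 2 ≤ k) (G : SimpleGraph (Fin 3 × Fin (k - 1)))
    (hG : ∀ a b : Fin 3 × Fin (k - 1), G.Adj a b ↔ a.1 ≠ b.1)
    (v : Fin 3 × Fin (k - 1)) : {u | G.Adj v u}.ncard = 2 * k - 2 := by
  have hs : {u | G.Adj v u}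
      = ↑(Finset.univ.filter (fun p : Fin 3 × Fin (k - 1) => p.1 ≠ v.1)) := by
    ext u
    simp [hG, ne_comm]
  rw [hs, Set.ncard_coe_finset, filterCard]
  omega

/-- The complete tripartite graph with three parts of size `k-1` (`k ≥ 2`), on
`n = 3k-3` vertices: (1) it contains no book `B_k` and no friendship graph `F_k`;
(2) every vertex has degree `2k-2 = (n+k-1)/2`; (3) under any proper edge-coloring,
every vertex has color degree `2k-2`, and there are neither `k` rainbow triangles
sharing one common edge nor `k` rainbow triangles only sharing one common vertex. -/
theorem statement5 (k : ℕ) (hk : 2 ≤ k)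
    (G : SimpleGraph (Fin 3 × Fin (k - 1)))
    (hG : ∀ a b : Fin 3 × Fin (k - 1), G.Adj a b ↔ a.1 ≠ b.1) :
    Fintype.card (Fin 3 × Fin (k - 1)) = 3 * k - 3 ∧
    -- (1) no book B_k
    (¬ ∃ (u v : Fin 3 × Fin (k - 1)) (W : Finset (Fin 3 × Fin (k - 1))),
        G.Adj u v ∧ W.card = k ∧ ∀ w ∈ W, G.Adj u w ∧ G.Adj v w) ∧
    -- (1) no friendship graph F_k
    (¬ ∃ (v : Fin 3 × Fin (k - 1)) (x y : Fin k → Fin 3 × Fin (k - 1)),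
        Function.Injective (Sum.elim x y) ∧
        ∀ i, G.Adj v (x i) ∧ G.Adj v (y i) ∧ G.Adj (x i) (y i)) ∧
    -- (2) every vertex has degree 2k-2 = (n+k-1)/2
    (∀ v : Fin 3 × Fin (k - 1), {u | G.Adj v u}.ncard = 2 * k - 2) ∧
    2 * k - 2 = (Fintype.card (Fin 3 × Fin (k - 1)) + k - 1) / 2 ∧
    -- (3) properly edge-colored versions
    (∀ c : Sym2 (Fin 3 × Fin (k - 1)) → ℕ,
      (∀ u v w : Fin 3 × Fin (k - 1),
          G.Adj u v → G.Adj u w → v ≠ w → c s(u, v) ≠ c s(u, w)) →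
      (∀ v, colorDeg G c v = 2 * k - 2) ∧
      (¬ ∃ (u v : Fin 3 × Fin (k - 1)) (W : Finset (Fin 3 × Fin (k - 1))),
          G.Adj u v ∧ W.card = k ∧ ∀ w ∈ W, IsRainbowTri G c u v w) ∧
      (¬ ∃ (v : Fin 3 × Fin (k - 1)) (x y : Fin k → Fin 3 × Fin (k - 1)),
          Function.Injective (Sum.elim x y) ∧
          ∀ i, IsRainbowTri G c v (x i) (y i))) := by
  have hcard : Fintype.card (Fin 3 × Fin (k - 1)) = 3 * k - 3 := by
    simp [Fintype.card_prod]
    omega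
  refine ⟨hcard, noBook hk G hG, ?_, degSet hk G hG, ?_, ?_⟩
  · rintro ⟨v, x, y, hinj, h⟩
    exact noFan hk G hG ⟨v, x, y, hinj, fun i => ⟨(h i).1, (h i).2.1⟩⟩
  · rw [hcard]; omega
  · intro c hc
    refine ⟨?_, ?_, ?_⟩
    · intro v
      have himg : {β : ℕ | ∃ u, G.Adj v u ∧ c s(v, u) = β}
          = (fun u => c s(v, u)) '' {u | G.Adj v u} := by
        ext β; simp [Set.mem_image]
      have hinj : Set.InjOn (fun u => c s(v, u)) {u | G.Adj v u} := by
        intro a ha b hb hab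
        by_contra hne
        exact hc v a b ha hb hne hab
      rw [colorDeg, himg, Set.ncard_image_of_injOn hinj, degSet hk G hG]
    · rintro ⟨u, v, W, huv, hc', hW⟩
      exact noBook hk G hG ⟨u, v, W, huv, hc', fun w hw => ⟨(hW w hw).2.1, (hW w hw).2.2.1⟩⟩
    · rintro ⟨v, x, y, hinj, h⟩
      exact noFan hk G hG ⟨v, x, y, hinj, fun i => ⟨(h i).1, (h i).2.1⟩⟩
end

section
/- Let G be an edge-colored graph, v a vertex of G, and x ∈ N(v). Set X = N(v) \ N_{c(vx)}(v). Then rt(v,x) ≥ σ_{v,X}(x), and consequently rt(v, N_{c(vx)}(v)) ≥ Σ_{x' ∈ N_{c(vx)}(v)} σ_{v,X'}(x'), where for each x' ∈ N_{c(vx)}(v) we put X' = N(v) \ N_{c(vx')}(v). -/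
/-- `rtE G c v x` : the number of rainbow triangles of `G` containing the edge `vx`. -/
noncomputable def rtE {V : Type*} (G : SimpleGraph V) (c : Sym2 V → ℕ) (v x : V) : ℕ :=
  Set.ncard {w : V | IsRainbowTri G c v x w}

/-- `sigmaR G c v X y` : the number of colors `β` restricted for `y` by `(v, X)`,
i.e. colors `β` such that there is `x ∈ X ∩ N(y)` with `c(xy) = β`, the path
`v x y` is rainbow (`vx` is an edge and `c(vx) ≠ β`), and `β` does not appear on
any edge from `y` to `N(y) \ X`. -/
noncomputable def sigmaR {V : Type*} (G : SimpleGraph V) (c : Sym2 V → ℕ)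
    (v : V) (X : Set V) (y : V) : ℕ :=
  Set.ncard {β : ℕ | ∃ x ∈ X, G.Adj x y ∧ c s(x, y) = β ∧
    G.Adj v x ∧ c s(v, x) ≠ β ∧ ∀ z, G.Adj y z → z ∉ X → c s(y, z) ≠ β}

private lemma key {V : Type*} [Fintype V] [DecidableEq V]
    (G : SimpleGraph V) (c : Sym2 V → ℕ)
    (v x : V) (hvx : G.Adj v x) :
    sigmaR G c v {u | G.Adj v u ∧ c s(v, u) ≠ c s(v, x)} x ≤ rtE G c v x := by
  classical
  unfold sigmaR rtE
  set X : Set V := {u | G.Adj v u ∧ c s(v, u) ≠ c s(v, x)} with hX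
  set S : Set ℕ := {β : ℕ | ∃ w ∈ X, G.Adj w x ∧ c s(w, x) = β ∧
    G.Adj v w ∧ c s(v, w) ≠ β ∧ ∀ z, G.Adj x z → z ∉ X → c s(x, z) ≠ β} with hS
  apply Set.ncard_le_ncard_of_injOn (fun β => if h : β ∈ S then h.choose else x)
  · intro β hβ
    simp only [dif_pos hβ]
    obtain ⟨hwX, hwx, hcwx, hvw, hcvw, hres⟩ := hβ.choose_spec
    set w := hβ.choose
    have hvX : v ∉ X := by simp [hX]
    have hcvx : c s(v, x) ≠ β := by
      have := hres v hvx.symm hvX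
      rwa [Sym2.eq_swap] at this
    have hXw : c s(v, w) ≠ c s(v, x) := hwX.2
    refine ⟨hvx, hvw, hwx.symm, fun h => hXw h.symm, ?_, ?_⟩
    · rw [show s(x, w) = s(w, x) from Sym2.eq_swap, hcwx]; exact hcvx
    · rw [show s(x, w) = s(w, x) from Sym2.eq_swap, hcwx]; exact hcvw
  · intro β₁ h₁ β₂ h₂ heq
    simp only [dif_pos h₁, dif_pos h₂] at heq
    obtain ⟨_, _, hc1, _⟩ := h₁.choose_spec
    obtain ⟨_, _, hc2, _⟩ := h₂.choose_spec
    rw [← hc1, ← hc2, heq]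

/-- For `x ∈ N(v)` and `X = N(v) \ N_{c(vx)}(v)` we have `rt(v,x) ≥ σ_{v,X}(x)`,
and summing over the color class `N_{c(vx)}(v)` gives
`rt(v, N_{c(vx)}(v)) ≥ Σ_{x' ∈ N_{c(vx)}(v)} σ_{v,X'}(x')`. -/
theorem statement6 {V : Type*} [Fintype V] [DecidableEq V]
    (G : SimpleGraph V) [DecidableRel G.Adj] (c : Sym2 V → ℕ)
    (v x : V) (hvx : G.Adj v x) :
    sigmaR G c v {u | G.Adj v u ∧ c s(v, u) ≠ c s(v, x)} x ≤ rtE G c v x ∧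
    ∑ x' ∈ (G.neighborFinset v).filter (fun u => c s(v, u) = c s(v, x)),
        sigmaR G c v {u | G.Adj v u ∧ c s(v, u) ≠ c s(v, x')} x'
      ≤ ∑ x' ∈ (G.neighborFinset v).filter (fun u => c s(v, u) = c s(v, x)),
          rtE G c v x' := by
  refine ⟨key G c v x hvx, Finset.sum_le_sum fun x' hx' => ?_⟩
  simp only [Finset.mem_filter, SimpleGraph.mem_neighborFinset] at hx'
  exact key G c v x' hx'.1
end

section
/- Let G be an edge-minimal edge-colored graph on n vertices, let v be a vertex with s = d^c(v), and let 1 ≤ i ≤ s. Then, as integers, rt(v, Nᵢ(v)) ≥ Σ_{x ∈ Nᵢ(v)} (d^c(x) + d^c(v) − n) + dᵢ · Σ_{j=1}^{s} (dⱼ − 1) − dᵢ(dᵢ − 1) − Σ_{y ∈ N_!(v)} d_{c(vy)}(y, Nᵢ(v)). -/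
/-- `NColor G c v β` : the `β`-neighborhood of `v`, i.e. the neighbors `u` of `v`
with `c(vu) = β`. -/
def NColor {V : Type*} [Fintype V] [DecidableEq V] (G : SimpleGraph V)
    [DecidableRel G.Adj] (c : Sym2 V → ℕ) (v : V) (β : ℕ) : Finset V :=
  (G.neighborFinset v).filter fun u => c s(v, u) = β

/-- `dColor G c v β = d_β(v)`, the number of neighbors of `v` joined to `v`
by an edge of color `β`. -/
def dColor {V : Type*} [Fintype V] [DecidableEq V] (G : SimpleGraph V)
    [DecidableRel G.Adj] (c : Sym2 V → ℕ) (v : V) (β : ℕ) : ℕ :=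
  (NColor G c v β).card

/-- `dColorIn G c y β X = d_β(y, X)`, the number of neighbors of `y` in `X` joined
to `y` by an edge of color `β`. -/
def dColorIn {V : Type*} [Fintype V] [DecidableEq V] (G : SimpleGraph V)
    [DecidableRel G.Adj] (c : Sym2 V → ℕ) (y : V) (β : ℕ) (X : Finset V) : ℕ :=
  (X.filter fun u => G.Adj y u ∧ c s(y, u) = β).card

/-- `NBangF G c v = N_!(v)`, the set of neighbors `y` of `v` such that the color
`c(vy)` appears exactly once at `v`. -/
def NBangF {V : Type*} [Fintype V] [DecidableEq V] (G : SimpleGraph V)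
    [DecidableRel G.Adj] (c : Sym2 V → ℕ) (v : V) : Finset V :=
  (G.neighborFinset v).filter fun y => dColor G c v (c s(v, y)) = 1

/-- `G` is edge-minimal: deleting any edge decreases the color degree of one of
its endpoints. -/
def EdgeMinimal {V : Type*} (G : SimpleGraph V) (c : Sym2 V → ℕ) : Prop :=
  ∀ u w : V, G.Adj u w →
    colorDeg (G.deleteEdges {s(u, w)}) c u < colorDeg G c u ∨
    colorDeg (G.deleteEdges {s(u, w)}) c w < colorDeg G c w


open Finset

section Help
variable {V : Type*} [Fintype V] [DecidableEq V] (G : SimpleGraph V)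
  [DecidableRel G.Adj] (c : Sym2 V → ℕ)

lemma colorSet_eq (v : V) :
    {β : ℕ | ∃ u, G.Adj v u ∧ c s(v, u) = β} =
      ↑((G.neighborFinset v).image fun u => c s(v, u)) := by
  ext β
  simp [SimpleGraph.mem_neighborFinset]

lemma colorDeg_eq (v : V) :
    colorDeg G c v = ((G.neighborFinset v).image fun u => c s(v, u)).card := by
  rw [colorDeg, colorSet_eq, Set.ncard_coe_finset]

/-- In an edge-minimal graph, if `vw` and `xw` are edges of the same color with
`x ≠ v`, then this color appears only once at `v`. -/
lemma key_s7 {V : Type*} (G : SimpleGraph V) (c : Sym2 V → ℕ)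
    (hmin : EdgeMinimal G c) {v w x : V} (hvw : G.Adj v w) (hxw : G.Adj x w)
    (hx : x ≠ v) (hcol : c s(x, w) = c s(v, w)) :
    ∀ u, G.Adj v u → c s(v, u) = c s(v, w) → u = w := by
  rcases hmin v w hvw with h | h
  · -- a color is lost at v; its only witness is w
    by_contra hno
    push_neg at hno
    obtain ⟨u, hu, hc, huw⟩ := hno
    -- show color sets at v are equal, contradiction
    have hset : {δ : ℕ | ∃ z, (G.deleteEdges {s(v, w)}).Adj v z ∧ c s(v, z) = δ} =
        {δ : ℕ | ∃ z, G.Adj v z ∧ c s(v, z) = δ} := by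
      ext δ
      constructor
      · rintro ⟨z, hz, rfl⟩
        exact ⟨z, (SimpleGraph.deleteEdges_adj ..).mp hz |>.1, rfl⟩
      · rintro ⟨z, hz, rfl⟩
        by_cases hzw : z = w
        · subst hzw
          refine ⟨u, (SimpleGraph.deleteEdges_adj ..).mpr ⟨hu, ?_⟩, hc⟩
          simp only [Set.mem_singleton_iff]
          exact fun hh => huw (Sym2.congr_right.mp hh)
        · refine ⟨z, (SimpleGraph.deleteEdges_adj ..).mpr ⟨hz, ?_⟩, rfl⟩
          simp only [Set.mem_singleton_iff]
          exact fun hh => hzw (Sym2.congr_right.mp hh)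
    rw [colorDeg, colorDeg, hset] at h
    exact lt_irrefl _ h
  · -- impossible: color at w kept by witness x
    exfalso
    have hset : {δ : ℕ | ∃ z, (G.deleteEdges {s(v, w)}).Adj w z ∧ c s(w, z) = δ} =
        {δ : ℕ | ∃ z, G.Adj w z ∧ c s(w, z) = δ} := by
      ext δ
      constructor
      · rintro ⟨z, hz, rfl⟩
        exact ⟨z, (SimpleGraph.deleteEdges_adj ..).mp hz |>.1, rfl⟩
      · rintro ⟨z, hz, rfl⟩
        by_cases hzv : z = v
        · refine ⟨x, (SimpleGraph.deleteEdges_adj ..).mpr ⟨hxw.symm, ?_⟩, ?_⟩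
          · simp only [Set.mem_singleton_iff]
            intro hh
            rw [show s(v,w) = s(w,v) from Sym2.eq_swap] at hh
            exact hx (Sym2.congr_right.mp hh)
          · rw [hzv, show (s(w,x) : Sym2 V) = s(x,w) from Sym2.eq_swap, hcol,
              show (s(v,w) : Sym2 V) = s(w,v) from Sym2.eq_swap]
        · refine ⟨z, (SimpleGraph.deleteEdges_adj ..).mpr ⟨hz, ?_⟩, rfl⟩
          simp only [Set.mem_singleton_iff]
          intro hh
          rw [show s(v,w) = s(w,v) from Sym2.eq_swap] at hh
          exact hzv (Sym2.congr_right.mp hh)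
    rw [colorDeg, colorDeg, hset] at h
    exact lt_irrefl _ h

end Help

section Main
variable {V : Type*} [Fintype V] [DecidableEq V] (G : SimpleGraph V)
  [DecidableRel G.Adj] (c : Sym2 V → ℕ)

lemma perx (hmin : EdgeMinimal G c) (v : V) (β : ℕ) {x : V}
    (hx : x ∈ NColor G c v β) :
    ((G.neighborFinset v).card : ℤ) - dColor G c v β
      - ((Fintype.card V : ℤ) - 1 - colorDeg G c x)
      - (((NBangF G c v).filter fun y => G.Adj y x ∧ c s(y, x) = c s(v, y)).card : ℤ)
    ≤ rtE G c v x := by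
  rw [NColor, mem_filter, SimpleGraph.mem_neighborFinset] at hx
  obtain ⟨hadj, hcx⟩ := hx
  classical
  -- representative map for colors at x
  set Ix := (G.neighborFinset x).image (fun u => c s(x, u)) with hIx
  have hrepfn : ∀ γ ∈ Ix, ∃ u, G.Adj x u ∧ c s(x, u) = γ := by
    intro γ hγ
    simp only [hIx, mem_image, SimpleGraph.mem_neighborFinset] at hγ
    obtain ⟨u, hu, hc⟩ := hγ
    exact ⟨u, hu, hc⟩
  let rep : ℕ → V := fun γ =>
    if γ = β then v else if h : ∃ u, G.Adj x u ∧ c s(x, u) = γ then h.choose else v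
  have hcxv : c s(x, v) = β := by rw [show (s(x,v) : Sym2 V) = s(v,x) from Sym2.eq_swap, hcx]
  have hrep : ∀ γ ∈ Ix, G.Adj x (rep γ) ∧ c s(x, rep γ) = γ := by
    intro γ hγ
    by_cases hb : γ = β
    · subst hb
      simp only [rep, if_pos rfl]
      exact ⟨hadj.symm, hcxv⟩
    · have h := hrepfn γ hγ
      simp only [rep, if_neg hb, dif_pos h]
      exact h.choose_spec
  set A := Ix.image rep with hA
  have hAcard : A.card = colorDeg G c x := by
    rw [hA, colorDeg_eq, ← hIx, Finset.card_image_of_injOn]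
    intro γ1 h1 γ2 h2 he
    rw [← (hrep γ1 h1).2, ← (hrep γ2 h2).2, he]
  have hAN : ∀ w ∈ A, G.Adj x w := by
    intro w hw
    rw [hA, mem_image] at hw
    obtain ⟨γ, hγ, rfl⟩ := hw
    exact (hrep γ hγ).1
  have hvA : v ∈ A := by
    have hβIx : β ∈ Ix := by
      rw [hIx, mem_image]
      exact ⟨v, by rw [SimpleGraph.mem_neighborFinset]; exact hadj.symm, hcxv⟩
    rw [hA, mem_image]
    exact ⟨β, hβIx, by simp [rep]⟩
  have hxA : x ∉ A := fun h => G.irrefl (hAN x h)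
  set D := G.neighborFinset v \ NColor G c v β with hD
  have hxD : x ∉ D := by
    rw [hD, mem_sdiff]
    rintro ⟨h1, h2⟩
    exact h2 (by rw [NColor, mem_filter]; exact ⟨h1, hcx⟩)
  set GS := (D ∩ A).filter (fun w => c s(x, w) ≠ c s(v, w)) with hGS
  -- every member of GS gives a rainbow triangle
  have hmemD : ∀ w ∈ D, G.Adj v w ∧ c s(v, w) ≠ β := by
    intro w hw
    rw [hD, mem_sdiff, SimpleGraph.mem_neighborFinset] at hw
    refine ⟨hw.1, fun hc => hw.2 ?_⟩
    rw [NColor, mem_filter, SimpleGraph.mem_neighborFinset]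
    exact ⟨hw.1, hc⟩
  have hGSsub : ↑GS ⊆ {w : V | IsRainbowTri G c v x w} := by
    intro w hw
    rw [Finset.mem_coe, hGS, mem_filter, mem_inter] at hw
    obtain ⟨⟨hwD, hwA⟩, hne⟩ := hw
    obtain ⟨hvwadj, hvwne⟩ := hmemD w hwD
    have hxw : G.Adj x w := hAN w hwA
    have hcxwne : c s(x, w) ≠ β := by
      intro hh
      -- then w = rep of color β = v, but Adj v w
      rw [hA, mem_image] at hwA
      obtain ⟨γ, hγ, rfl⟩ := hwA
      rw [(hrep γ hγ).2] at hh
      have hrb : rep γ = v := by rw [hh]; exact if_pos rfl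
      rw [hrb] at hvwadj
      exact G.irrefl hvwadj
    refine ⟨hadj, hvwadj, hxw, ?_, ?_, ?_⟩
    · rw [hcx]; exact fun hh => hvwne hh.symm
    · rw [hcx]; exact fun hh => hcxwne hh.symm
    · exact fun hh => hne hh.symm
  have h1 : (GS.card : ℤ) ≤ (rtE G c v x : ℤ) := by
    have := Set.ncard_le_ncard hGSsub (Set.toFinite _)
    rw [Set.ncard_coe_finset] at this
    rw [rtE]
    exact_mod_cast this
  set bad := (D ∩ A).filter (fun w => ¬ c s(x, w) ≠ c s(v, w)) with hbad
  have hGSbad : GS.card + bad.card = (D ∩ A).card :=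
    Finset.card_filter_add_card_filter_not _
  -- bad ⊆ badset
  have hbadsub : bad ⊆ (NBangF G c v).filter fun y => G.Adj y x ∧ c s(y, x) = c s(v, y) := by
    intro w hw
    rw [hbad, mem_filter, mem_inter] at hw
    obtain ⟨⟨hwD, hwA⟩, hne⟩ := hw
    push_neg at hne
    obtain ⟨hvwadj, hvwne⟩ := hmemD w hwD
    have hxw : G.Adj x w := hAN w hwA
    have hxnev : x ≠ v := fun h => G.irrefl (h ▸ hadj.symm)
    have hkey := key_s7 G c hmin hvwadj hxw hxnev hne
    have hdc1 : dColor G c v (c s(v, w)) = 1 := by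
      rw [dColor]
      have : NColor G c v (c s(v, w)) = {w} := by
        apply Finset.eq_singleton_iff_unique_mem.mpr
        constructor
        · rw [NColor, mem_filter, SimpleGraph.mem_neighborFinset]; exact ⟨hvwadj, rfl⟩
        · intro u hu
          rw [NColor, mem_filter, SimpleGraph.mem_neighborFinset] at hu
          exact hkey u hu.1 hu.2
      rw [this, Finset.card_singleton]
    rw [mem_filter]
    refine ⟨?_, hxw.symm, ?_⟩
    · rw [NBangF, mem_filter, SimpleGraph.mem_neighborFinset]
      exact ⟨hvwadj, hdc1⟩
    · rw [show (s(w,x) : Sym2 V) = s(x,w) from Sym2.eq_swap, hne,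
        show (s(v,w) : Sym2 V) = s(w,v) from Sym2.eq_swap]
  have h2 : (bad.card : ℤ) ≤
      (((NBangF G c v).filter fun y => G.Adj y x ∧ c s(y, x) = c s(v, y)).card : ℤ) := by
    exact_mod_cast Finset.card_le_card hbadsub
  -- counting : |D ∩ A| ≥ |D| - (n - 1 - |A|)
  have hDA : (D.card : ℤ) - ((Fintype.card V : ℤ) - 1 - A.card) ≤ ((D ∩ A).card : ℤ) := by
    have hsplit : (D ∩ A).card + (D \ A).card = D.card := Finset.card_inter_add_card_sdiff D A
    have hsub2 : D \ A ⊆ Finset.univ \ insert x A := by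
      intro w hw
      rw [mem_sdiff] at hw ⊢
      refine ⟨mem_univ _, ?_⟩
      rw [mem_insert]
      rintro (rfl | h)
      · exact hxD hw.1
      · exact hw.2 h
    have hc2 : (D \ A).card ≤ Fintype.card V - (A.card + 1) := by
      have := Finset.card_le_card hsub2
      rwa [Finset.card_sdiff_of_subset (Finset.subset_univ _), Finset.card_univ,
        Finset.card_insert_of_notMem hxA] at this
    have hle : A.card + 1 ≤ Fintype.card V := by
      have := Finset.card_le_card (Finset.subset_univ (insert x A))
      rwa [Finset.card_insert_of_notMem hxA, Finset.card_univ] at this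
    have hc2' : ((D \ A).card : ℤ) ≤ (Fintype.card V : ℤ) - (A.card + 1) := by
      have h3 : ((D \ A).card : ℤ) ≤ ((Fintype.card V - (A.card + 1) : ℕ) : ℤ) := by
        exact_mod_cast hc2
      rw [Nat.cast_sub hle] at h3
      push_cast at h3 ⊢
      linarith
    have hsplit' : ((D ∩ A).card : ℤ) + ((D \ A).card : ℤ) = (D.card : ℤ) := by
      exact_mod_cast hsplit
    linarith
  have hDcard : (D.card : ℤ) = ((G.neighborFinset v).card : ℤ) - dColor G c v β := by
    have hsubN : NColor G c v β ⊆ G.neighborFinset v := Finset.filter_subset _ _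
    rw [hD, Finset.card_sdiff_of_subset hsubN, Nat.cast_sub (Finset.card_le_card hsubN)]
    rfl
  have hGSc : (GS.card : ℤ) + (bad.card : ℤ) = ((D ∩ A).card : ℤ) := by exact_mod_cast hGSbad
  rw [← hAcard]
  linarith

end Main

/-- For an edge-minimal edge-colored graph and any color class `N_β(v)` at `v`
(`β` a color appearing at `v`; the classes ordered by decreasing size are
`N₁(v), …, N_s(v)`, and the statement holds for each of them):
`rt(v, N_β(v)) ≥ Σ_{x ∈ N_β(v)} (d^c(x)+d^c(v)-n) + d_β(v) Σ_{γ} (d_γ(v)-1)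
 - d_β(v)(d_β(v)-1) - Σ_{y ∈ N_!(v)} d_{c(vy)}(y, N_β(v))`,
where `γ` runs over all colors appearing at `v`. -/
theorem statement7 {V : Type*} [Fintype V] [DecidableEq V]
    (G : SimpleGraph V) [DecidableRel G.Adj] (c : Sym2 V → ℕ)
    (hmin : EdgeMinimal G c) (v : V) (β : ℕ)
    (hβ : β ∈ (G.neighborFinset v).image fun u => c s(v, u)) :
    (∑ x ∈ NColor G c v β,
        ((colorDeg G c x : ℤ) + (colorDeg G c v : ℤ) - (Fintype.card V : ℤ)))
      + (dColor G c v β : ℤ) *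
          (∑ γ ∈ (G.neighborFinset v).image (fun u => c s(v, u)),
            ((dColor G c v γ : ℤ) - 1))
      - (dColor G c v β : ℤ) * ((dColor G c v β : ℤ) - 1)
      - (∑ y ∈ NBangF G c v, (dColorIn G c y (c s(v, y)) (NColor G c v β) : ℤ))
    ≤ ∑ x ∈ NColor G c v β, (rtE G c v x : ℤ) := by
  classical
  set Nβ := NColor G c v β with hNβ
  set I := (G.neighborFinset v).image fun u => c s(v, u) with hI
  set b : V → ℕ := fun x =>
    ((NBangF G c v).filter fun y => G.Adj y x ∧ c s(y, x) = c s(v, y)).card with hb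
  have hswap : ∑ y ∈ NBangF G c v, dColorIn G c y (c s(v, y)) Nβ = ∑ x ∈ Nβ, b x := by
    simp only [dColorIn, hb, Finset.card_filter]
    exact Finset.sum_comm
  have hswapZ : ∑ y ∈ NBangF G c v, (dColorIn G c y (c s(v, y)) Nβ : ℤ)
      = ∑ x ∈ Nβ, (b x : ℤ) := by exact_mod_cast hswap
  have hdeg : (G.neighborFinset v).card = ∑ γ ∈ I, dColor G c v γ := by
    rw [hI]
    unfold dColor NColor
    exact Finset.card_eq_sum_card_fiberwise (fun u hu => Finset.mem_image_of_mem _ hu)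
  have hdegZ : ((G.neighborFinset v).card : ℤ) = ∑ γ ∈ I, (dColor G c v γ : ℤ) := by
    exact_mod_cast hdeg
  have hs : (colorDeg G c v : ℤ) = (I.card : ℤ) := by
    rw [colorDeg_eq, hI]
  have hNc : (Nβ.card : ℤ) = (dColor G c v β : ℤ) := by rw [hNβ]; rfl
  have hper : ∀ x ∈ Nβ,
      ((G.neighborFinset v).card : ℤ) - dColor G c v β
        - ((Fintype.card V : ℤ) - 1 - colorDeg G c x) - (b x : ℤ)
      ≤ (rtE G c v x : ℤ) := fun x hx => perx G c hmin v β hx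
  have e3 : ∑ γ ∈ I, ((dColor G c v γ : ℤ) - 1)
      = ((G.neighborFinset v).card : ℤ) - (I.card : ℤ) := by
    rw [Finset.sum_sub_distrib, Finset.sum_const, hdegZ]
    push_cast
    ring
  have expandR : ∑ x ∈ Nβ,
      (((G.neighborFinset v).card : ℤ) - dColor G c v β
        - ((Fintype.card V : ℤ) - 1 - colorDeg G c x) - (b x : ℤ))
      = (∑ x ∈ Nβ, (colorDeg G c x : ℤ)) - (∑ x ∈ Nβ, (b x : ℤ))
        + (Nβ.card : ℤ) * (((G.neighborFinset v).card : ℤ) - (dColor G c v β : ℤ)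
            - (Fintype.card V : ℤ) + 1) := by
    simp only [Finset.sum_sub_distrib, Finset.sum_add_distrib, Finset.sum_const,
      nsmul_eq_mul]
    ring
  have expandL : ∑ x ∈ Nβ, ((colorDeg G c x : ℤ) + (colorDeg G c v : ℤ)
        - (Fintype.card V : ℤ))
      = (∑ x ∈ Nβ, (colorDeg G c x : ℤ))
        + (Nβ.card : ℤ) * ((colorDeg G c v : ℤ) - (Fintype.card V : ℤ)) := by
    simp only [Finset.sum_add_distrib, Finset.sum_sub_distrib, Finset.sum_const,
      nsmul_eq_mul]
    ring
  refine le_trans ?_ (Finset.sum_le_sum hper)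
  rw [expandR, expandL, hswapZ, e3, hs]
  nlinarith [hNc, sq_nonneg ((dColor G c v β : ℤ))]
end

section
/- Let G be an edge-minimal edge-colored graph on n vertices and v a vertex with s = d^c(v). Then 2·rt(v) ≥ Σ_{x ∈ N(v)} (d^c(x) + d^c(v) − n) + d(v) · Σ_{j=1}^{s} (dⱼ − 1) − Σ_{i=1}^{s} dᵢ(dᵢ − 1) − Σ_{y ∈ N_!(v)} d_{c(vy)}(y, N(v)), where the right-hand side is interpreted in the integers. -/
/-- `rtV G c v` : the number of rainbow triangles of `G` containing the vertex `v`
(counted as unordered pairs `{x, y}` completing `v` to a rainbow triangle). -/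
noncomputable def rtV {V : Type*} (G : SimpleGraph V) (c : Sym2 V → ℕ) (v : V) : ℕ :=
  Set.ncard {p : Sym2 V | ∃ x y : V, p = s(x, y) ∧ IsRainbowTri G c v x y}

/-!
Fix a neighbour `x` of `v` and put `α = c(vx)`. Every colour at `x` other than `α` sits on
an edge `xw` with `w ≠ v` such that either `w ∉ N(v)`, or `c(vw) = α`, or `c(vw) = c(xw)`,
or `vxw` is a rainbow triangle. In the third case edge-minimality of `vw` forces `c(vw)` to
appear only once at `v`, i.e. `w ∈ N_!(v)`: otherwise `v` keeps the colour through another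
edge and `w` through `wx`. Counting the four kinds of `w` gives
`d^c(x) ≤ 1 + (n - d(v) - 1) + (d_α(v) - 1) + |{w ∈ N_!(v) : c(xw) = c(vw)}| + rt(vx)`,
and summing over `x ∈ N(v)`, where each rainbow triangle at `v` is met twice, gives the bound.
-/

open Finset

theorem card_filter_sym2_mk_eq_le_two {α : Type*} [DecidableEq α] (s : Finset (α × α))
    (z : Sym2 α) : #{p ∈ s | s(p.1, p.2) = z} ≤ 2 := by
  induction z using Sym2.ind with
  | h a b =>
    calc #{p ∈ s | s(p.1, p.2) = s(a, b)} ≤ #({(a, b), (b, a)} : Finset (α × α)) :=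
          card_le_card fun p hp => by
            rcases Sym2.mk_eq_mk_iff (p := p) (q := (a, b)) |>.1 (mem_filter.1 hp).2 with
              rfl | rfl <;> simp
      _ ≤ 2 := card_le_two

instance IsRainbowTri.instDecidable {V : Type*} (G : SimpleGraph V) [DecidableRel G.Adj]
    (c : Sym2 V → ℕ) (u v w : V) : Decidable (IsRainbowTri G c u v w) := by
  unfold IsRainbowTri; infer_instance

theorem rtE_eq_card {V : Type*} [Fintype V] {G : SimpleGraph V} [DecidableRel G.Adj]
    {c : Sym2 V → ℕ} (v x : V) : rtE G c v x = #{w | IsRainbowTri G c v x w} := by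
  rw [rtE, Set.ncard_eq_toFinset_card', Set.toFinset_ofPred]

section ColorDegree

variable {V : Type*} {G : SimpleGraph V} {c : Sym2 V → ℕ}

theorem colorDeg_eq_card_image (v : V) [Fintype (G.neighborSet v)] :
    colorDeg G c v = #((G.neighborFinset v).image fun u => c s(v, u)) := by
  rw [colorDeg, ← Set.ncard_coe_finset]
  congr 1
  ext β
  simp [eq_comm]

theorem colorDeg_deleteEdges_eq {v w z : V} (hz : G.Adj v z) (hzw : z ≠ w)
    (hc : c s(v, z) = c s(v, w)) :
    colorDeg (G.deleteEdges {s(v, w)}) c v = colorDeg G c v := by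
  unfold colorDeg
  congr 1
  ext γ
  simp only [Set.mem_ofPred_eq, SimpleGraph.deleteEdges_adj, Set.mem_singleton_iff]
  refine ⟨fun ⟨u, ⟨hu, _⟩, hcu⟩ => ⟨u, hu, hcu⟩, fun ⟨u, hu, hcu⟩ => ?_⟩
  by_cases huw : u = w
  · subst huw
    exact ⟨z, ⟨hz, mt Sym2.congr_right.1 hzw⟩, hc.trans hcu⟩
  · exact ⟨u, ⟨hu, mt Sym2.congr_right.1 huw⟩, hcu⟩

end ColorDegree

section RainbowCount

variable {V : Type*} [Fintype V] [DecidableEq V] {G : SimpleGraph V} [DecidableRel G.Adj]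
  {c : Sym2 V → ℕ}

theorem EdgeMinimal.dColor_eq_one (hmin : EdgeMinimal G c) {v w x : V} (hvw : G.Adj v w)
    (hxw : G.Adj x w) (hxv : x ≠ v) (hc : c s(x, w) = c s(v, w)) :
    dColor G c v (c s(v, w)) = 1 := by
  have hw : w ∈ NColor G c v (c s(v, w)) := by simp [NColor, hvw]
  by_contra hne
  obtain ⟨u, hu, huw⟩ :=
    exists_mem_ne (lt_of_le_of_ne (card_pos.2 ⟨w, hw⟩) (Ne.symm hne)) w
  simp only [NColor, mem_filter, SimpleGraph.mem_neighborFinset] at hu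
  have hkeep_v := colorDeg_deleteEdges_eq hu.1 huw hu.2
  have hkeep_w : colorDeg (G.deleteEdges {s(v, w)}) c w = colorDeg G c w := by
    rw [Sym2.eq_swap]
    exact colorDeg_deleteEdges_eq hxw.symm hxv (by simpa [Sym2.eq_swap] using hc)
  rcases hmin v w hvw with h | h <;> omega

theorem EdgeMinimal.mem_of_adj_of_color_ne (hmin : EdgeMinimal G c) {v x w : V}
    (hx : G.Adj v x) (hxw : G.Adj x w) (hα : c s(x, w) ≠ c s(v, x)) :
    w ∈ (NColor G c v (c s(v, x))).erase x
      ∪ {w ∈ NBangF G c v | G.Adj x w ∧ c s(x, w) = c s(v, w)}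
      ∪ ({w | IsRainbowTri G c v x w} : Finset V) ∪ (insert v (G.neighborFinset v))ᶜ := by
  have hwv : w ≠ v := by
    rintro rfl
    exact hα (Sym2.eq_swap ▸ rfl)
  simp only [mem_union, mem_erase, mem_filter, mem_compl, mem_insert, mem_univ, true_and,
    NColor, NBangF, SimpleGraph.mem_neighborFinset]
  by_cases hvw : G.Adj v w
  swap
  · exact Or.inr (by tauto)
  by_cases hvwα : c s(v, w) = c s(v, x)
  · exact Or.inl (Or.inl (Or.inl ⟨hxw.ne', hvw, hvwα⟩))
  by_cases hbang : c s(x, w) = c s(v, w)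
  · have hunique := hmin.dColor_eq_one hvw hxw hx.ne' hbang
    exact Or.inl (Or.inl (Or.inr ⟨⟨hvw, hunique⟩, hxw, hbang⟩))
  · exact Or.inl (Or.inr ⟨hx, hvw, hxw, Ne.symm hvwα, Ne.symm hα, Ne.symm hbang⟩)

theorem EdgeMinimal.colorDeg_add_degree_le (hmin : EdgeMinimal G c) {v x : V}
    (hx : G.Adj v x) :
    colorDeg G c x + G.degree v + 1 ≤ Fintype.card V + dColor G c v (c s(v, x))
      + #{w ∈ NBangF G c v | G.Adj x w ∧ c s(x, w) = c s(v, w)} + rtE G c v x := by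
  set A := (NColor G c v (c s(v, x))).erase x
  set M := {w ∈ NBangF G c v | G.Adj x w ∧ c s(x, w) = c s(v, w)}
  set R := ({w | IsRainbowTri G c v x w} : Finset V)
  set O := (insert v (G.neighborFinset v))ᶜ
  have hcover : (G.neighborFinset x).image (fun w => c s(x, w)) ⊆
      (insert v (A ∪ M ∪ R ∪ O)).image (fun w => c s(x, w)) := by
    simp only [subset_iff, mem_image, SimpleGraph.mem_neighborFinset]
    rintro _ ⟨w, hxw, rfl⟩
    by_cases hα : c s(x, w) = c s(v, x)
    · exact ⟨v, mem_insert_self _ _, by rw [hα, Sym2.eq_swap]⟩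
    · exact ⟨w, mem_insert_of_mem (hmin.mem_of_adj_of_color_ne hx hxw hα), rfl⟩
  have hA : #A + 1 = dColor G c v (c s(v, x)) :=
    card_erase_add_one (by simp [NColor, hx])
  have hO : #O + (G.degree v + 1) = Fintype.card V := by
    rw [← card_compl_add_card (insert v (G.neighborFinset v)), card_insert_of_notMem (by simp),
      SimpleGraph.card_neighborFinset_eq_degree]
  have hcount : colorDeg G c x ≤ #A + #M + #R + #O + 1 :=
    calc colorDeg G c x ≤ #(insert v (A ∪ M ∪ R ∪ O)) := by
          rw [colorDeg_eq_card_image]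
          exact (card_le_card hcover).trans card_image_le
      _ ≤ #(A ∪ M ∪ R ∪ O) + 1 := card_insert_le _ _
      _ ≤ #A + #M + #R + #O + 1 := by
          have := card_union_le (A ∪ M ∪ R) O
          have := card_union_le (A ∪ M) R
          have := card_union_le A M
          omega
  have hR : rtE G c v x = #R := rtE_eq_card v x
  omega

theorem sum_rtE_le_two_mul_rtV (v : V) :
    ∑ x ∈ G.neighborFinset v, rtE G c v x ≤ 2 * rtV G c v := by
  set P := ({p | IsRainbowTri G c v p.1 p.2} : Finset (V × V))
  have hP : ∑ x, rtE G c v x = #P := by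
    simp only [rtE_eq_card, card_filter, P, Fintype.sum_prod_type]
  have hrtV : rtV G c v = #(P.image fun p => s(p.1, p.2)) := by
    rw [rtV, ← Set.ncard_coe_finset]
    congr 1
    ext z
    simp [P, eq_comm, and_comm]
  calc ∑ x ∈ G.neighborFinset v, rtE G c v x ≤ ∑ x, rtE G c v x :=
        sum_le_sum_of_subset (subset_univ _)
    _ ≤ 2 * rtV G c v := by
        rw [hP, hrtV]
        exact card_le_mul_card_image P 2 fun z _ => card_filter_sym2_mk_eq_le_two P z

theorem sum_card_filter_NBangF_eq (v : V) :
    ∑ x ∈ G.neighborFinset v, #{w ∈ NBangF G c v | G.Adj x w ∧ c s(x, w) = c s(v, w)}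
      = ∑ y ∈ NBangF G c v, dColorIn G c y (c s(v, y)) (G.neighborFinset v) := by
  simp_rw [card_filter]
  rw [sum_comm]
  refine sum_congr rfl fun y _ => ?_
  rw [dColorIn, card_filter]
  refine sum_congr rfl fun x _ => if_congr ?_ rfl rfl
  rw [G.adj_comm x y, Sym2.eq_swap]

theorem sum_dColor_eq_degree (v : V) :
    ∑ γ ∈ (G.neighborFinset v).image (fun u => c s(v, u)), dColor G c v γ = G.degree v :=
  (card_eq_sum_card_image _ _).symm

theorem sum_dColor_comp_eq_sum_sq (v : V) :
    ∑ x ∈ G.neighborFinset v, dColor G c v (c s(v, x))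
      = ∑ γ ∈ (G.neighborFinset v).image (fun u => c s(v, u)),
          dColor G c v γ * dColor G c v γ := by
  rw [sum_comp]
  rfl

end RainbowCount

/-- For an edge-minimal edge-colored graph `G` and a vertex `v`:
`2·rt(v) ≥ Σ_{x ∈ N(v)} (d^c(x)+d^c(v)-n) + d(v) Σ_γ (d_γ(v)-1)
 - Σ_γ d_γ(v)(d_γ(v)-1) - Σ_{y ∈ N_!(v)} d_{c(vy)}(y, N(v))`,
where `γ` runs over all colors appearing at `v`. -/
theorem statement8 {V : Type*} [Fintype V] [DecidableEq V]
    (G : SimpleGraph V) [DecidableRel G.Adj] (c : Sym2 V → ℕ)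
    (hmin : EdgeMinimal G c) (v : V) :
    (∑ x ∈ G.neighborFinset v,
        ((colorDeg G c x : ℤ) + (colorDeg G c v : ℤ) - (Fintype.card V : ℤ)))
      + (G.degree v : ℤ) *
          (∑ γ ∈ (G.neighborFinset v).image (fun u => c s(v, u)),
            ((dColor G c v γ : ℤ) - 1))
      - (∑ γ ∈ (G.neighborFinset v).image (fun u => c s(v, u)),
          (dColor G c v γ : ℤ) * ((dColor G c v γ : ℤ) - 1))
      - (∑ y ∈ NBangF G c v, (dColorIn G c y (c s(v, y)) (G.neighborFinset v) : ℤ))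
    ≤ 2 * (rtV G c v : ℤ) := by
  have hlocal := sum_le_sum fun x hx =>
    hmin.colorDeg_add_degree_le ((G.mem_neighborFinset v x).1 hx)
  rw [← Nat.cast_le (α := ℤ)] at hlocal
  have hrt : (∑ x ∈ G.neighborFinset v, rtE G c v x : ℤ) ≤ 2 * rtV G c v := by
    exact_mod_cast sum_rtE_le_two_mul_rtV v
  have hd : (∑ γ ∈ (G.neighborFinset v).image (fun u => c s(v, u)), dColor G c v γ : ℤ)
      = G.degree v := by exact_mod_cast sum_dColor_eq_degree v
  have hsq := congrArg (Nat.cast (R := ℤ)) (sum_dColor_comp_eq_sum_sq (G := G) (c := c) v)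
  have hbang := congrArg (Nat.cast (R := ℤ)) (sum_card_filter_NBangF_eq (G := G) (c := c) v)
  push_cast at hlocal hsq hbang
  simp only [sum_add_distrib, sum_sub_distrib, sum_const, nsmul_eq_mul, mul_sub, mul_one,
    SimpleGraph.card_neighborFinset_eq_degree, colorDeg_eq_card_image v] at hlocal ⊢
  rw [hd]
  linarith
end

section
/- Let G be an edge-colored graph and let v be a vertex with d^{mon}(v) = Δ^{mon}(G). Then B(v) ≥ 0, where B(v) = d(v) · Σ_{j=1}^{s} (dⱼ − 1) − Σ_{i=1}^{s} dᵢ(dᵢ − 1) − Σ_{y ∈ N_!(v)} d_{c(vy)}(y, N(v)) and s = d^c(v). -/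
/-- `dMon G c v = d^{mon}(v)`, the monochromatic degree of `v`: the maximum number
of edges at `v` sharing one color. -/
noncomputable def dMon {V : Type*} [Fintype V] [DecidableEq V] (G : SimpleGraph V)
    [DecidableRel G.Adj] (c : Sym2 V → ℕ) (v : V) : ℕ :=
  sSup (Set.range fun β => dColor G c v β)

/-- `DeltaMon G c = Δ^{mon}(G)`, the maximum monochromatic degree of `G`. -/
noncomputable def DeltaMon {V : Type*} [Fintype V] [DecidableEq V] (G : SimpleGraph V)
    [DecidableRel G.Adj] (c : Sym2 V → ℕ) : ℕ :=
  sSup (Set.range fun v => dMon G c v)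

section Aux
variable {V : Type*} [Fintype V] [DecidableEq V] (G : SimpleGraph V)
    [DecidableRel G.Adj] (c : Sym2 V → ℕ)

lemma dColor_le_degree (v : V) (β : ℕ) : dColor G c v β ≤ G.degree v := by
  exact Finset.card_le_card (Finset.filter_subset _ _)

lemma bdd_dColor (v : V) : BddAbove (Set.range fun β => dColor G c v β) := by
  exact ⟨G.degree v, by rintro x ⟨β, rfl⟩; exact dColor_le_degree G c v β⟩

lemma dColor_le_dMon (v : V) (β : ℕ) : dColor G c v β ≤ dMon G c v :=
  le_csSup (bdd_dColor G c v) ⟨β, rfl⟩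

lemma dMon_le_card (y : V) : dMon G c y ≤ Fintype.card V := by
  refine csSup_le ⟨dColor G c y 0, ⟨0, rfl⟩⟩ ?_
  rintro x ⟨β, rfl⟩
  exact le_trans (dColor_le_degree G c y β) (Finset.card_le_univ (G.neighborFinset y))

lemma dMon_le_DeltaMon (y : V) : dMon G c y ≤ DeltaMon G c :=
  le_csSup ⟨Fintype.card V, by rintro x ⟨u, rfl⟩; exact dMon_le_card G c u⟩ ⟨y, rfl⟩

end Aux

/-- For a vertex `v` with `d^{mon}(v) = Δ^{mon}(G)` we have `B(v) ≥ 0`, where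
`B(v) = d(v) Σ_γ (d_γ(v)-1) - Σ_γ d_γ(v)(d_γ(v)-1) - Σ_{y ∈ N_!(v)} d_{c(vy)}(y, N(v))`
and `γ` runs over all colors appearing at `v`. -/
theorem statement9 {V : Type*} [Fintype V] [DecidableEq V]
    (G : SimpleGraph V) [DecidableRel G.Adj] (c : Sym2 V → ℕ)
    (v : V) (hv : dMon G c v = DeltaMon G c) :
    0 ≤ (G.degree v : ℤ) *
          (∑ γ ∈ (G.neighborFinset v).image (fun u => c s(v, u)),
            ((dColor G c v γ : ℤ) - 1))
      - (∑ γ ∈ (G.neighborFinset v).image (fun u => c s(v, u)),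
          (dColor G c v γ : ℤ) * ((dColor G c v γ : ℤ) - 1))
      - (∑ y ∈ NBangF G c v, (dColorIn G c y (c s(v, y)) (G.neighborFinset v) : ℤ)) := by
  classical
  set N := G.neighborFinset v with hN
  set Γ := N.image (fun u => c s(v, u)) with hGam
  set Δ := dMon G c v with hDel
  -- degree is sum of color degrees
  have hdeg : G.degree v = ∑ γ ∈ Γ, dColor G c v γ := by
    have := Finset.card_eq_sum_card_fiberwise
      (f := fun u => c s(v, u)) (s := N) (t := Γ)
      (fun x hx => Finset.mem_image_of_mem _ hx)
    exact this
  have hone : ∀ γ ∈ Γ, 1 ≤ dColor G c v γ := by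
    intro γ hγ
    obtain ⟨u, hu, rfl⟩ := Finset.mem_image.mp hγ
    exact Finset.card_pos.mpr ⟨u, Finset.mem_filter.mpr ⟨hu, rfl⟩⟩
  have hled : ∀ γ, dColor G c v γ ≤ G.degree v := dColor_le_degree G c v
  have hleD : ∀ γ, dColor G c v γ ≤ Δ := dColor_le_dMon G c v
  -- bound for the N_! sum terms
  have hbang : ∀ y ∈ NBangF G c v,
      dColorIn G c y (c s(v, y)) N + 1 ≤ Δ := by
    intro y hy
    have hyN : y ∈ N := (Finset.mem_filter.mp hy).1
    have hadj : G.Adj v y := by simpa [N] using hyN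
    set β := c s(v, y) with hβ
    have hvmem : v ∈ NColor G c y β := by
      refine Finset.mem_filter.mpr ⟨(G.mem_neighborFinset y v).mpr hadj.symm, ?_⟩
      rw [Sym2.eq_swap]
    have hsub : insert v (N.filter fun u => G.Adj y u ∧ c s(y, u) = β)
        ⊆ NColor G c y β := by
      intro u hu
      rcases Finset.mem_insert.mp hu with rfl | hu
      · exact hvmem
      · obtain ⟨huN, hadj', hc'⟩ := Finset.mem_filter.mp hu
        exact Finset.mem_filter.mpr ⟨(G.mem_neighborFinset y u).mpr hadj', hc'⟩
    have hvnot : v ∉ (N.filter fun u => G.Adj y u ∧ c s(y, u) = β) := by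
      intro h
      have hvv : v ∈ G.neighborFinset v := (Finset.mem_filter.mp h).1
      exact G.irrefl ((G.mem_neighborFinset v v).mp hvv)
    have hcard : dColorIn G c y β N + 1 ≤ dColor G c y β := by
      have h := Finset.card_le_card hsub
      rw [Finset.card_insert_of_notMem hvnot] at h
      have e1 : dColorIn G c y β N
          = (N.filter fun u => G.Adj y u ∧ c s(y, u) = β).card := rfl
      have e2 : dColor G c y β = (NColor G c y β).card := rfl
      omega
    calc dColorIn G c y β N + 1 ≤ dColor G c y β := hcard
      _ ≤ dMon G c y := dColor_le_dMon G c y β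
      _ ≤ DeltaMon G c := dMon_le_DeltaMon G c y
      _ = Δ := hv.symm
  -- rewrite goal as sum of products minus the bang sum
  have hrw : (G.degree v : ℤ) * (∑ γ ∈ Γ, ((dColor G c v γ : ℤ) - 1))
      - (∑ γ ∈ Γ, (dColor G c v γ : ℤ) * ((dColor G c v γ : ℤ) - 1))
      = ∑ γ ∈ Γ, ((G.degree v : ℤ) - dColor G c v γ) * ((dColor G c v γ : ℤ) - 1) := by
    rw [Finset.mul_sum, ← Finset.sum_sub_distrib]
    congr 1; ext γ; ring
  rw [hrw, sub_nonneg]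
  -- each summand nonneg
  have hterm_nonneg : ∀ γ ∈ Γ,
      (0:ℤ) ≤ ((G.degree v : ℤ) - dColor G c v γ) * ((dColor G c v γ : ℤ) - 1) := by
    intro γ hγ
    apply mul_nonneg
    · simpa using (Int.ofNat_le.mpr (hled γ))
    · simpa using (Int.ofNat_le.mpr (hone γ hγ))
  by_cases hD : Δ ≤ 1
  · -- trivial case: every color degree is 1 and every bang term is 0
    have h3 : ∀ y ∈ NBangF G c v,
        (dColorIn G c y (c s(v, y)) N : ℤ) = 0 := by
      intro y hy
      have := hbang y hy
      omega
    calc (∑ y ∈ NBangF G c v, (dColorIn G c y (c s(v, y)) N : ℤ))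
        = 0 := Finset.sum_eq_zero h3
      _ ≤ _ := Finset.sum_nonneg hterm_nonneg
  · push_neg at hD
    -- there is a color attaining Δ
    have hmem : Δ ∈ Set.range fun β => dColor G c v β := by
      rw [hDel, dMon]
      exact Nat.sSup_mem (s := Set.range fun β => dColor G c v β)
        ⟨dColor G c v 0, ⟨0, rfl⟩⟩ (bdd_dColor G c v)
    obtain ⟨β, hβ⟩ := hmem
    have hβ' : dColor G c v β = Δ := hβ
    have hβΓ : β ∈ Γ := by
      have hpos : 0 < (NColor G c v β).card := by
        have h : 0 < dColor G c v β := by rw [hβ']; omega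
        exact h
      obtain ⟨u, hu⟩ := Finset.card_pos.mp hpos
      obtain ⟨huN, hcu⟩ := Finset.mem_filter.mp hu
      exact Finset.mem_image.mpr ⟨u, huN, hcu⟩
    set t := (NBangF G c v).card with ht
    -- NBangF disjoint from NColor v β
    have hdisj : Disjoint (NBangF G c v) (NColor G c v β) := by
      rw [Finset.disjoint_left]
      intro y hy hy'
      have h1 : dColor G c v (c s(v, y)) = 1 := (Finset.mem_filter.mp hy).2
      have h2 : c s(v, y) = β := (Finset.mem_filter.mp hy').2
      rw [h2, hβ'] at h1
      omega
    have hsubN : NBangF G c v ∪ NColor G c v β ⊆ N := by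
      apply Finset.union_subset
      · exact Finset.filter_subset _ _
      · exact Finset.filter_subset _ _
    have hcardle : t + Δ ≤ G.degree v := by
      have h := Finset.card_le_card hsubN
      rw [Finset.card_union_of_disjoint hdisj] at h
      have e1 : (NColor G c v β).card = Δ := hβ'
      have e2 : G.degree v = N.card := rfl
      omega
    -- bang sum ≤ t * (Δ - 1)
    have hS3 : (∑ y ∈ NBangF G c v, (dColorIn G c y (c s(v, y)) N : ℤ))
        ≤ (t : ℤ) * ((Δ : ℤ) - 1) := by
      calc (∑ y ∈ NBangF G c v, (dColorIn G c y (c s(v, y)) N : ℤ))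
          ≤ ∑ _y ∈ NBangF G c v, ((Δ : ℤ) - 1) := by
            apply Finset.sum_le_sum
            intro y hy
            have := hbang y hy
            omega
        _ = (t : ℤ) * ((Δ : ℤ) - 1) := by
            rw [Finset.sum_const, nsmul_eq_mul]
    have hsingle : ((G.degree v : ℤ) - Δ) * ((Δ : ℤ) - 1)
        ≤ ∑ γ ∈ Γ, ((G.degree v : ℤ) - dColor G c v γ) * ((dColor G c v γ : ℤ) - 1) := by
      have h := Finset.single_le_sum hterm_nonneg hβΓ
      rwa [hβ'] at h
    have h1 : (t : ℤ) ≤ (G.degree v : ℤ) - Δ := by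
      have := hcardle; omega
    have h2 : (0:ℤ) ≤ (Δ : ℤ) - 1 := by
      have := hD; omega
    calc (∑ y ∈ NBangF G c v, (dColorIn G c y (c s(v, y)) N : ℤ))
        ≤ (t : ℤ) * ((Δ : ℤ) - 1) := hS3
      _ ≤ ((G.degree v : ℤ) - Δ) * ((Δ : ℤ) - 1) := mul_le_mul_of_nonneg_right h1 h2
      _ ≤ _ := hsingle
end

section
/- Let k ≥ 2 be an integer and G a finite simple graph on n ≥ 3k−2 vertices with minimum degree δ(G) ≥ (n+k−1)/2. Then G contains a book B_k, i.e., there exists an edge uv of G such that u and v have at least k common neighbors. -/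
/-- If `k ≥ 2`, `n ≥ 3k-2` and `δ(G) ≥ (n+k-1)/2`, then `G` contains a book `B_k`:
an edge `uv` with at least `k` common neighbors. -/
theorem statement11 {V : Type*} [Fintype V] [DecidableEq V]
    (G : SimpleGraph V) [DecidableRel G.Adj] (k : ℕ) (hk : 2 ≤ k)
    (hn : 3 * k - 2 ≤ Fintype.card V)
    (hδ : ∀ v : V, Fintype.card V + k - 1 ≤ 2 * G.degree v) :
    ∃ u v : V, G.Adj u v ∧
      k ≤ (G.neighborFinset u ∩ G.neighborFinset v).card := by
  by_contra hcon
  push_neg at hcon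
  set n := Fintype.card V with hnn
  have hn4 : 4 ≤ n := by omega
  -- basic identity for any edge
  have hsum : ∀ a b : V,
      (G.neighborFinset a ∩ G.neighborFinset b).card +
        (G.neighborFinset a ∪ G.neighborFinset b).card
        = G.degree a + G.degree b := by
    intro a b
    rw [Finset.card_inter_add_card_union,
      SimpleGraph.card_neighborFinset_eq_degree,
      SimpleGraph.card_neighborFinset_eq_degree]
  -- for any edge, the union of the neighborhoods is everything
  have key : ∀ a b : V, G.Adj a b →
      (G.neighborFinset a ∪ G.neighborFinset b) = Finset.univ := by
    intro a b hab
    have h1 := hcon a b hab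
    have h2 := hsum a b
    have h3 : (G.neighborFinset a ∪ G.neighborFinset b).card ≤ n :=
      Finset.card_le_univ _
    have ha := hδ a
    have hb := hδ b
    have h4 : (G.neighborFinset a ∪ G.neighborFinset b).card = n := by omega
    apply Finset.eq_univ_of_card
    rw [h4]
  -- there is an edge
  have : Nonempty V := Fintype.card_pos_iff.mp (by omega)
  obtain ⟨u⟩ := this
  have hdu : 0 < G.degree u := by have := hδ u; omega
  obtain ⟨v, hv⟩ : ∃ v, G.Adj u v := by
    have := (G.degree_pos_iff_exists_adj u).mp hdu
    exact this
  -- a common neighbor w of u and v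
  have huvun := key u v hv
  have huvcard : n = (G.neighborFinset u ∪ G.neighborFinset v).card := by
    rw [huvun, Finset.card_univ]
  have h2 := hsum u v
  have hδu := hδ u
  have hδv := hδ v
  have hintpos : 0 < (G.neighborFinset u ∩ G.neighborFinset v).card := by omega
  obtain ⟨w, hw⟩ := Finset.card_pos.mp hintpos
  rw [Finset.mem_inter, SimpleGraph.mem_neighborFinset,
    SimpleGraph.mem_neighborFinset] at hw
  obtain ⟨hwu, hwv⟩ := hw
  -- N(w) contains everything outside N(u) ∩ N(v)
  have hsub : Finset.univ \ (G.neighborFinset u ∩ G.neighborFinset v)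
      ⊆ G.neighborFinset w := by
    intro x hx
    rw [Finset.mem_sdiff, Finset.mem_inter] at hx
    rw [SimpleGraph.mem_neighborFinset]
    by_cases hxu : x ∈ G.neighborFinset u
    · have hxv : x ∉ G.neighborFinset v := fun hxv => hx.2 ⟨hxu, hxv⟩
      have : x ∈ G.neighborFinset v ∪ G.neighborFinset w := by
        rw [key v w hwv]; exact Finset.mem_univ x
      rw [Finset.mem_union] at this
      rcases this with h | h
      · exact absurd h hxv
      · exact (SimpleGraph.mem_neighborFinset G w x).mp h
    · have : x ∈ G.neighborFinset u ∪ G.neighborFinset w := by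
        rw [key u w hwu]; exact Finset.mem_univ x
      rw [Finset.mem_union] at this
      rcases this with h | h
      · exact absurd h hxu
      · exact (SimpleGraph.mem_neighborFinset G w x).mp h
  have hdegw : n - (G.neighborFinset u ∩ G.neighborFinset v).card ≤ G.degree w := by
    have h5 := Finset.card_le_card hsub
    rw [Finset.card_sdiff_of_subset (Finset.subset_univ _), Finset.card_univ] at h5
    rwa [SimpleGraph.card_neighborFinset_eq_degree] at h5
  -- edge uw gives an upper bound on deg w
  have huwun : n = (G.neighborFinset u ∪ G.neighborFinset w).card := by
    rw [key u w hwu, Finset.card_univ]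
  have h6 := hsum u w
  have h7 := hcon u w hwu
  have h8 := hcon u v hv
  omega
end

section
/- Let k ≥ 2 be an integer and G a finite simple graph on n ≥ 50k² vertices with minimum degree δ(G) ≥ (n+1)/2. Then G contains a friendship graph F_k, i.e., there exist a vertex v and 2k distinct neighbors x₁,y₁,…,x_k,y_k of v such that xᵢyᵢ is an edge of G for each i. -/
open Finset

private lemma consInj14 {V : Type*} {m : ℕ} {x y : Fin m → V} {a b : V}
    (hinj : Function.Injective (Sum.elim x y)) (hab : a ≠ b)
    (hax : ∀ i, a ≠ x i) (hay : ∀ i, a ≠ y i)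
    (hbx : ∀ i, b ≠ x i) (hby : ∀ i, b ≠ y i) :
    Function.Injective (Sum.elim (Fin.cons a x) (Fin.cons b y)) := by
  intro p q h
  rcases p with i | i <;> rcases q with j | j <;>
    induction i using Fin.cases <;> induction j using Fin.cases <;>
    simp only [Sum.elim_inl, Sum.elim_inr, Fin.cons_zero, Fin.cons_succ] at h <;>
  first
    | rfl
    | (exact absurd h (hax _)) | (exact absurd h.symm (hax _))
    | (exact absurd h (hay _)) | (exact absurd h.symm (hay _))
    | (exact absurd h (hbx _)) | (exact absurd h.symm (hbx _))
    | (exact absurd h (hby _)) | (exact absurd h.symm (hby _))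
    | (exact absurd h hab) | (exact absurd h.symm hab)
    | (have := hinj (show Sum.elim x y (Sum.inl _) = Sum.elim x y (Sum.inl _) from h);
       rw [Sum.inl.injEq] at this; rw [this])
    | (have := hinj (show Sum.elim x y (Sum.inr _) = Sum.elim x y (Sum.inr _) from h);
       rw [Sum.inr.injEq] at this; rw [this])
    | (exact absurd (hinj (show Sum.elim x y (Sum.inl _) = Sum.elim x y (Sum.inr _) from h)) (by simp))
    | (exact absurd (hinj (show Sum.elim x y (Sum.inr _) = Sum.elim x y (Sum.inl _) from h)) (by simp))

private lemma bipMatch14 {V : Type*} [Fintype V] [DecidableEq V] (G : SimpleGraph V)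
    [DecidableRel G.Adj] (m : ℕ) : ∀ (j : ℕ) (A B : Finset V), Disjoint A B →
    (∀ a ∈ A, (B \ G.neighborFinset a).card ≤ m) →
    j ≤ A.card → j + m ≤ B.card →
    ∃ x y : Fin j → V, Function.Injective (Sum.elim x y) ∧
      ∀ i, x i ∈ A ∧ y i ∈ B ∧ G.Adj (x i) (y i) := by
  intro j
  induction j with
  | zero =>
    intro A B _ _ _ _
    refine ⟨Fin.elim0, Fin.elim0, ?_, fun i => i.elim0⟩
    rintro (i | i) <;> exact i.elim0
  | succ j ih =>
    intro A B hdisj hm hA hB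
    obtain ⟨a, ha⟩ : A.Nonempty := Finset.card_pos.mp (by omega)
    have hBa : 0 < (B ∩ G.neighborFinset a).card := by
      have := Finset.card_inter_add_card_sdiff B (G.neighborFinset a)
      have := hm a ha
      omega
    obtain ⟨b, hb⟩ := Finset.card_pos.mp hBa
    rw [Finset.mem_inter, SimpleGraph.mem_neighborFinset] at hb
    obtain ⟨hbB, hadj⟩ := hb
    obtain ⟨x, y, hinj, hall⟩ := ih (A.erase a) (B.erase b)
      (Finset.disjoint_of_subset_left (Finset.erase_subset _ _)
        (Finset.disjoint_of_subset_right (Finset.erase_subset _ _) hdisj))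
      (fun a' ha' => le_trans (Finset.card_le_card
        (Finset.sdiff_subset_sdiff (Finset.erase_subset _ _) le_rfl))
        (hm a' (Finset.mem_of_mem_erase ha')))
      (by have := Finset.card_erase_of_mem ha; omega)
      (by have := Finset.card_erase_of_mem hbB; omega)
    have hxA : ∀ i, x i ∈ A.erase a := fun i => (hall i).1
    have hyB : ∀ i, y i ∈ B.erase b := fun i => (hall i).2.1
    refine ⟨Fin.cons a x, Fin.cons b y, consInj14 hinj ?_ ?_ ?_ ?_ ?_, ?_⟩
    · exact fun h => Finset.disjoint_left.mp hdisj ha (h ▸ hbB)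
    · exact fun i h => (Finset.mem_erase.mp (hxA i)).1 h.symm
    · exact fun i h => Finset.disjoint_left.mp hdisj ha
        (h ▸ (Finset.mem_of_mem_erase (hyB i)))
    · exact fun i h => Finset.disjoint_left.mp hdisj (Finset.mem_of_mem_erase (hxA i)) (h ▸ hbB)
    · exact fun i h => (Finset.mem_erase.mp (hyB i)).1 h.symm
    · refine Fin.cases ?_ ?_
      · exact ⟨ha, hbB, hadj⟩
      · intro i
        exact ⟨Finset.mem_of_mem_erase (by simpa using hxA i),
          Finset.mem_of_mem_erase (by simpa using hyB i),
          by simpa using (hall i).2.2⟩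

private lemma matchDicho14 {V : Type*} [Fintype V] [DecidableEq V] (G : SimpleGraph V)
    [DecidableRel G.Adj] (S : Finset V) : ∀ j : ℕ,
    (∃ x y : Fin j → V, Function.Injective (Sum.elim x y) ∧
      ∀ i, x i ∈ S ∧ y i ∈ S ∧ G.Adj (x i) (y i)) ∨
    (∃ m, m < j ∧ ∃ x y : Fin m → V,
      (∀ i, x i ∈ S ∧ y i ∈ S ∧ G.Adj (x i) (y i)) ∧
      ∀ a ∈ S, ∀ b ∈ S, (∀ i, a ≠ x i ∧ a ≠ y i) → (∀ i, b ≠ x i ∧ b ≠ y i) → ¬G.Adj a b) := by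
  intro j
  induction j with
  | zero =>
    left
    refine ⟨Fin.elim0, Fin.elim0, ?_, fun i => i.elim0⟩
    rintro (i | i) <;> exact i.elim0
  | succ j ih =>
    rcases ih with ⟨x, y, hinj, hall⟩ | ⟨m, hm, rest⟩
    · by_cases hE : ∃ a ∈ S, ∃ b ∈ S, (∀ i, a ≠ x i ∧ a ≠ y i) ∧ (∀ i, b ≠ x i ∧ b ≠ y i) ∧ G.Adj a b
      · obtain ⟨a, ha, b, hb, hax, hbx, hadj⟩ := hE
        left
        refine ⟨Fin.cons a x, Fin.cons b y,
          consInj14 hinj hadj.ne (fun i => (hax i).1) (fun i => (hax i).2)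
            (fun i => (hbx i).1) (fun i => (hbx i).2), ?_⟩
        refine Fin.cases ⟨ha, hb, hadj⟩ ?_
        intro i
        exact ⟨by simpa using (hall i).1, by simpa using (hall i).2.1, by simpa using (hall i).2.2⟩
      · push_neg at hE
        right
        exact ⟨j, Nat.lt_succ_self j, x, y, hall, hE⟩
    · exact Or.inr ⟨m, by omega, rest⟩

private lemma swapSum14 {V : Type*} [Fintype V] [DecidableEq V] (G : SimpleGraph V)
    [DecidableRel G.Adj] (S T : Finset V) :
    ∑ u ∈ S, (G.neighborFinset u ∩ T).card = ∑ t ∈ T, (G.neighborFinset t ∩ S).card := by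
  have key : ∀ (u : V) (T : Finset V),
      (G.neighborFinset u ∩ T).card = ∑ t ∈ T, if G.Adj u t then 1 else 0 := by
    intro u T
    rw [← Finset.card_filter]
    congr 1
    ext t
    simp [SimpleGraph.mem_neighborFinset, and_comm]
  simp_rw [key]
  rw [Finset.sum_comm]
  refine Finset.sum_congr rfl fun t _ => Finset.sum_congr rfl fun u _ => ?_
  simp [G.adj_comm]

set_option maxHeartbeats 1000000 in
/-- If `k ≥ 2`, `n ≥ 50k²` and `δ(G) ≥ (n+1)/2`, then `G` contains a friendship
graph `F_k`: a vertex `v` and `2k` pairwise distinct neighbors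
`x 0, y 0, …, x (k-1), y (k-1)` of `v` with each `x i y i` an edge. -/
theorem statement14 {V : Type*} [Fintype V] [DecidableEq V]
    (G : SimpleGraph V) [DecidableRel G.Adj] (k : ℕ) (hk : 2 ≤ k)
    (hn : 50 * k ^ 2 ≤ Fintype.card V)
    (hδ : ∀ v : V, Fintype.card V + 1 ≤ 2 * G.degree v) :
    ∃ (v : V) (x y : Fin k → V),
      Function.Injective (Sum.elim x y) ∧
      ∀ i, G.Adj v (x i) ∧ G.Adj v (y i) ∧ G.Adj (x i) (y i) := by
  by_contra hfan
  have hno : ∀ (c : V) (x y : Fin k → V), Function.Injective (Sum.elim x y) →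
      (∀ i, G.Adj c (x i) ∧ G.Adj c (y i) ∧ G.Adj (x i) (y i)) → False :=
    fun c x y h1 h2 => hfan ⟨c, x, y, h1, h2⟩
  have hkk : 8 * k + 2 ≤ 50 * k ^ 2 := by nlinarith
  have hcardpos : 0 < Fintype.card V := by omega
  -- From fan-freeness : every neighbourhood is an independent set plus ≤ 2k vertices.
  have hindep : ∀ c : V, ∃ I : Finset V, I ⊆ G.neighborFinset c ∧
      G.degree c ≤ I.card + 2 * k ∧ ∀ p ∈ I, ∀ q ∈ I, ¬G.Adj p q := by
    intro c
    rcases matchDicho14 G (G.neighborFinset c) k with ⟨x, y, hinj, hall⟩ | ⟨m, hm, x, y, hall, hmax⟩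
    · exact absurd (hno c x y hinj (fun i =>
        ⟨(G.mem_neighborFinset c _).mp (hall i).1,
         (G.mem_neighborFinset c _).mp (hall i).2.1, (hall i).2.2⟩)) (by simp)
    · refine ⟨G.neighborFinset c \ (Finset.image x Finset.univ ∪ Finset.image y Finset.univ),
        Finset.sdiff_subset, ?_, ?_⟩
      · have h1 : (Finset.image x Finset.univ ∪ Finset.image y Finset.univ).card ≤ 2 * m := by
          have := Finset.card_union_le (Finset.image x Finset.univ) (Finset.image y Finset.univ)
          have hx := Finset.card_image_le (s := (Finset.univ : Finset (Fin m))) (f := x)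
          have hy := Finset.card_image_le (s := (Finset.univ : Finset (Fin m))) (f := y)
          simp only [Finset.card_univ, Fintype.card_fin] at hx hy
          omega
        have h2 := Finset.card_le_card_sdiff_add_card (s := G.neighborFinset c)
          (t := Finset.image x Finset.univ ∪ Finset.image y Finset.univ)
        rw [← G.card_neighborFinset_eq_degree]
        omega
      · intro p hp q hq hadj
        rw [Finset.mem_sdiff] at hp hq
        refine hmax p hp.1 q hq.1 (fun i => ⟨?_, ?_⟩) (fun i => ⟨?_, ?_⟩) hadj
        · exact fun h => hp.2 (Finset.mem_union_left _ (Finset.mem_image.mpr ⟨i, Finset.mem_univ i, h.symm⟩))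
        · exact fun h => hp.2 (Finset.mem_union_right _ (Finset.mem_image.mpr ⟨i, Finset.mem_univ i, h.symm⟩))
        · exact fun h => hq.2 (Finset.mem_union_left _ (Finset.mem_image.mpr ⟨i, Finset.mem_univ i, h.symm⟩))
        · exact fun h => hq.2 (Finset.mem_union_right _ (Finset.mem_image.mpr ⟨i, Finset.mem_univ i, h.symm⟩))
  -- upper bound for independent sets
  have hub : ∀ (J : Finset V), (∀ p ∈ J, ∀ q ∈ J, ¬G.Adj p q) → ∀ u, u ∈ J →
      G.degree u + J.card ≤ Fintype.card V := by
    intro J hJ u hu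
    have hd : Disjoint (G.neighborFinset u) J := Finset.disjoint_left.mpr
      (fun w hw hwJ => hJ u hu w hwJ ((G.mem_neighborFinset u w).mp hw))
    calc G.degree u + J.card = (G.neighborFinset u ∪ J).card := by
          rw [Finset.card_union_of_disjoint hd, G.card_neighborFinset_eq_degree]
      _ ≤ Fintype.card V := by
          rw [← Finset.card_univ]; exact Finset.card_le_card (Finset.subset_univ _)
  haveI : Nonempty V := Fintype.card_pos_iff.mp hcardpos
  set n := Fintype.card V with hndef
  obtain ⟨v⟩ := ‹Nonempty V›
  obtain ⟨I, hIsub, hIcard, hIind⟩ := hindep v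
  have ha4 : n + 1 ≤ 2 * I.card + 4 * k := by have := hδ v; omega
  have hIne : I.Nonempty := Finset.card_pos.mp (by omega)
  obtain ⟨u₀, hu₀⟩ := hIne
  obtain ⟨I', hI'sub, hI'card, hI'ind⟩ := hindep u₀
  have hb4 : n + 1 ≤ 2 * I'.card + 4 * k := by have := hδ u₀; omega
  have hdisj : Disjoint I I' := Finset.disjoint_left.mpr
    (fun w hwI hwI' => hIind u₀ hu₀ w hwI ((G.mem_neighborFinset u₀ w).mp (hI'sub hwI')))
  set R : Finset V := Finset.univ \ (I ∪ I') with hRdef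
  have hcard : I.card + I'.card + R.card = n := by
    have h1 := Finset.card_sdiff_add_card_eq_card (Finset.subset_univ (I ∪ I'))
    rw [Finset.card_union_of_disjoint hdisj, Finset.card_univ, ← hRdef] at h1
    omega
  have h2b : 2 * I'.card + 1 ≤ n := by
    rcases I'.eq_empty_or_nonempty with h | ⟨u', hu'⟩
    · simp [h]; omega
    · have := hub I' hI'ind u' hu'
      have := hδ u'
      omega
  -- degree decomposition
  have hsplit : ∀ (p : V) (X Y : Finset V), R = Finset.univ \ (X ∪ Y) →
      (∀ w, w ∈ G.neighborFinset p → w ∉ X) →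
      G.degree p = (G.neighborFinset p ∩ Y).card + (G.neighborFinset p ∩ R).card := by
    intro p X Y hR hnX
    have hsub : G.neighborFinset p ⊆ Y ∪ R := by
      intro w hw
      by_cases hY : w ∈ Y
      · exact Finset.mem_union_left _ hY
      · refine Finset.mem_union_right _ ?_
        rw [hR, Finset.mem_sdiff]
        exact ⟨Finset.mem_univ w, fun hXY => by
          rcases Finset.mem_union.mp hXY with h | h
          · exact hnX w hw h
          · exact hY h⟩
    have hdYR : Disjoint Y R := by
      rw [hR]
      exact Finset.disjoint_of_subset_left Finset.subset_union_right
        Finset.sdiff_disjoint.symm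
    have hdisj2 : Disjoint (G.neighborFinset p ∩ Y) (G.neighborFinset p ∩ R) :=
      Finset.disjoint_of_subset_left Finset.inter_subset_right
        (Finset.disjoint_of_subset_right Finset.inter_subset_right hdYR)
    calc G.degree p = (G.neighborFinset p).card := (G.card_neighborFinset_eq_degree p).symm
      _ = ((G.neighborFinset p ∩ Y) ∪ (G.neighborFinset p ∩ R)).card := by
          rw [← Finset.inter_union_distrib_left, Finset.inter_eq_left.mpr hsub]
      _ = (G.neighborFinset p ∩ Y).card + (G.neighborFinset p ∩ R).card :=
          Finset.card_union_of_disjoint hdisj2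
  have hIsplit : ∀ p ∈ I,
      G.degree p = (G.neighborFinset p ∩ I').card + (G.neighborFinset p ∩ R).card := by
    intro p hp
    exact hsplit p I I' rfl (fun w hw hwI => hIind p hp w hwI ((G.mem_neighborFinset p w).mp hw))
  have hI'split : ∀ p ∈ I',
      G.degree p = (G.neighborFinset p ∩ I).card + (G.neighborFinset p ∩ R).card := by
    intro p hp
    refine hsplit p I' I (by rw [Finset.union_comm]) (fun w hw hwI' =>
      hI'ind p hp w hwI' ((G.mem_neighborFinset p w).mp hw))
  -- the per-vertex bound on R
  have hper : ∀ r ∈ R, 2 * ((G.neighborFinset r ∩ I).card + (G.neighborFinset r ∩ I').card)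
      ≤ n + 6 * k := by
    intro r hr
    by_cases hbig : k ≤ (G.neighborFinset r ∩ I).card ∧
        k + R.card ≤ (G.neighborFinset r ∩ I').card
    · exfalso
      have hdisjAB : Disjoint (G.neighborFinset r ∩ I) (G.neighborFinset r ∩ I') :=
        Finset.disjoint_of_subset_left Finset.inter_subset_right
          (Finset.disjoint_of_subset_right Finset.inter_subset_right hdisj)
      have hmsay : ∀ p ∈ G.neighborFinset r ∩ I,
          ((G.neighborFinset r ∩ I') \ G.neighborFinset p).card ≤ R.card := by
        intro p hp
        have hpI : p ∈ I := (Finset.mem_inter.mp hp).2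
        have hdeg := hIsplit p hpI
        have c1 := Finset.card_inter_add_card_sdiff I' (G.neighborFinset p)
        have c2 : ((G.neighborFinset r ∩ I') \ G.neighborFinset p).card
            ≤ (I' \ G.neighborFinset p).card :=
          Finset.card_le_card (Finset.sdiff_subset_sdiff Finset.inter_subset_right le_rfl)
        have c4 : (G.neighborFinset p ∩ R).card ≤ R.card :=
          Finset.card_le_card Finset.inter_subset_right
        have c5 : (G.neighborFinset p ∩ I').card = (I' ∩ G.neighborFinset p).card := by
          rw [Finset.inter_comm]
        have c6 := hδ p
        omega
      obtain ⟨x, y, hinj, hall⟩ := bipMatch14 G R.card k (G.neighborFinset r ∩ I)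
        (G.neighborFinset r ∩ I') hdisjAB hmsay hbig.1 hbig.2
      exact hno r x y hinj (fun i =>
        ⟨(G.mem_neighborFinset r _).mp (Finset.mem_inter.mp (hall i).1).1,
         (G.mem_neighborFinset r _).mp (Finset.mem_inter.mp (hall i).2.1).1,
         (hall i).2.2⟩)
    · have hA : (G.neighborFinset r ∩ I).card ≤ I.card :=
        Finset.card_le_card Finset.inter_subset_right
      have hB : (G.neighborFinset r ∩ I').card ≤ I'.card :=
        Finset.card_le_card Finset.inter_subset_right
      omega
  -- summing
  have hkey1 : ∀ u ∈ I, n + 1 ≤ 2 * I'.card + 2 * (G.neighborFinset u ∩ R).card := by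
    intro u hu
    have h1 := hIsplit u hu
    have h2 : (G.neighborFinset u ∩ I').card ≤ I'.card :=
      Finset.card_le_card Finset.inter_subset_right
    have := hδ u
    omega
  have hkey2 : ∀ u ∈ I', n + 1 ≤ 2 * I.card + 2 * (G.neighborFinset u ∩ R).card := by
    intro u hu
    have h1 := hI'split u hu
    have h2 : (G.neighborFinset u ∩ I).card ≤ I.card :=
      Finset.card_le_card Finset.inter_subset_right
    have := hδ u
    omega
  have hsum1 : I.card * (n + 1) ≤ I.card * (2 * I'.card)
      + 2 * ∑ r ∈ R, (G.neighborFinset r ∩ I).card := by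
    rw [← swapSum14 G I R]
    calc I.card * (n + 1) = ∑ _u ∈ I, (n + 1) := by rw [Finset.sum_const, smul_eq_mul]
      _ ≤ ∑ u ∈ I, (2 * I'.card + 2 * (G.neighborFinset u ∩ R).card) :=
          Finset.sum_le_sum hkey1
      _ = I.card * (2 * I'.card) + 2 * ∑ u ∈ I, (G.neighborFinset u ∩ R).card := by
          rw [Finset.sum_add_distrib, Finset.sum_const, smul_eq_mul, ← Finset.mul_sum]
  have hsum2 : I'.card * (n + 1) ≤ I'.card * (2 * I.card)
      + 2 * ∑ r ∈ R, (G.neighborFinset r ∩ I').card := by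
    rw [← swapSum14 G I' R]
    calc I'.card * (n + 1) = ∑ _u ∈ I', (n + 1) := by rw [Finset.sum_const, smul_eq_mul]
      _ ≤ ∑ u ∈ I', (2 * I.card + 2 * (G.neighborFinset u ∩ R).card) :=
          Finset.sum_le_sum hkey2
      _ = I'.card * (2 * I.card) + 2 * ∑ u ∈ I', (G.neighborFinset u ∩ R).card := by
          rw [Finset.sum_add_distrib, Finset.sum_const, smul_eq_mul, ← Finset.mul_sum]
  have hsum3 : 2 * (∑ r ∈ R, (G.neighborFinset r ∩ I).card
      + ∑ r ∈ R, (G.neighborFinset r ∩ I').card) ≤ R.card * (n + 6 * k) := by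
    calc 2 * (∑ r ∈ R, (G.neighborFinset r ∩ I).card + ∑ r ∈ R, (G.neighborFinset r ∩ I').card)
        = ∑ r ∈ R, 2 * ((G.neighborFinset r ∩ I).card + (G.neighborFinset r ∩ I').card) := by
          rw [← Finset.sum_add_distrib, ← Finset.mul_sum]
      _ ≤ ∑ _r ∈ R, (n + 6 * k) := Finset.sum_le_sum hper
      _ = R.card * (n + 6 * k) := by rw [Finset.sum_const, smul_eq_mul]
  -- final arithmetic contradiction
  set a := I.card
  set b := I'.card
  set ρ := R.card
  set E1 := ∑ r ∈ R, (G.neighborFinset r ∩ I).card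
  set E2 := ∑ r ∈ R, (G.neighborFinset r ∩ I').card
  have z1 : (a : ℤ) * (n + 1) ≤ a * (2 * b) + 2 * E1 := by exact_mod_cast hsum1
  have z2 : (b : ℤ) * (n + 1) ≤ b * (2 * a) + 2 * E2 := by exact_mod_cast hsum2
  have z3 : 2 * ((E1 : ℤ) + E2) ≤ ρ * (n + 6 * k) := by exact_mod_cast hsum3
  have zc : (a : ℤ) + b + ρ = n := by exact_mod_cast hcard
  have za : (n : ℤ) + 1 ≤ 2 * a + 4 * k := by exact_mod_cast ha4
  have zb : (n : ℤ) + 1 ≤ 2 * b + 4 * k := by exact_mod_cast hb4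
  have zn : 50 * (k : ℤ) ^ 2 ≤ n := by exact_mod_cast hn
  have zk : (2 : ℤ) ≤ k := by exact_mod_cast hk
  have zρ0 : (0 : ℤ) ≤ ρ := Int.natCast_nonneg _
  have hP : (ρ : ℤ) ≤ 4 * k - 1 := by linarith
  have h4ab : 4 * (a : ℤ) * b ≤ ((a : ℤ) + b) ^ 2 := by nlinarith [sq_nonneg ((a : ℤ) - b)]
  have hprod : ((a : ℤ) + b) * ((n : ℤ) + 1) = ((n : ℤ) - ρ) * ((n : ℤ) + 1) := by rw [← zc]; ring
  have hsq : ((a : ℤ) + b) ^ 2 = ((n : ℤ) - ρ) ^ 2 := by rw [← zc]; ring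
  have e1 : ((a : ℤ) + b) * ((n : ℤ) + 1) ≤ 4 * a * b + ρ * (n + 6 * k) := by linarith [z1, z2, z3]
  have hfin : (n : ℤ) ≤ ρ ^ 2 + ρ + 6 * k * ρ := by linarith [e1, h4ab, hprod, hsq]
  have hρk : (ρ : ℤ) ^ 2 ≤ (4 * k - 1) * ρ := by nlinarith [hP, zρ0]
  have h10 : 10 * (k : ℤ) * ρ ≤ 10 * k * (4 * k - 1) := by nlinarith [hP, zk]
  nlinarith [hfin, hρk, h10, zn, zk]
end

section
/- Let k ≥ 2 be an integer and G a finite simple graph on n ≥ 6k vertices with minimum degree δ(G) ≥ (n+1)/2. Then G contains a book B_k, i.e., there exists an edge uv of G such that u and v have at least k common neighbors. -/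
/-- If `k ≥ 2`, `n ≥ 6k` and `δ(G) ≥ (n+1)/2`, then `G` contains a book `B_k`:
an edge `uv` with at least `k` common neighbors. -/
theorem statement15 {V : Type*} [Fintype V] [DecidableEq V]
    (G : SimpleGraph V) [DecidableRel G.Adj] (k : ℕ) (hk : 2 ≤ k)
    (hn : 6 * k ≤ Fintype.card V)
    (hδ : ∀ v : V, Fintype.card V + 1 ≤ 2 * G.degree v) :
    ∃ u v : V, G.Adj u v ∧
      k ≤ (G.neighborFinset u ∩ G.neighborFinset v).card := by
  classical
  set n := Fintype.card V with hn'
  -- basic codegree bound: deg a + deg b ≤ n + |N(a) ∩ N(b)|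
  have codeg : ∀ a b : V, G.degree a + G.degree b ≤
      n + (G.neighborFinset a ∩ G.neighborFinset b).card := by
    intro a b
    have h1 := Finset.card_union_add_card_inter (G.neighborFinset a) (G.neighborFinset b)
    have h2 : (G.neighborFinset a ∪ G.neighborFinset b).card ≤ n :=
      Finset.card_le_univ _
    rw [SimpleGraph.card_neighborFinset_eq_degree, SimpleGraph.card_neighborFinset_eq_degree] at h1
    omega
  -- there is a vertex
  have hpos : 0 < n := by omega
  obtain ⟨v⟩ := Fintype.card_pos_iff.mp hpos
  -- it has a neighbor u
  have hne : (G.neighborFinset v).Nonempty := by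
    rw [← Finset.card_pos, SimpleGraph.card_neighborFinset_eq_degree]
    have := hδ v; omega
  obtain ⟨u, hu⟩ := hne
  rw [SimpleGraph.mem_neighborFinset] at hu
  -- u and v have a common neighbor w
  have hcw : (G.neighborFinset u ∩ G.neighborFinset v).Nonempty := by
    rw [← Finset.card_pos]
    have := codeg u v
    have h1 := hδ u
    have h2 := hδ v
    omega
  obtain ⟨w, hw⟩ := hcw
  rw [Finset.mem_inter, SimpleGraph.mem_neighborFinset, SimpleGraph.mem_neighborFinset] at hw
  obtain ⟨huw, hvw⟩ := hw
  -- triple bound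
  set A := G.neighborFinset u
  set B := G.neighborFinset v
  set C := G.neighborFinset w
  have hAB := Finset.card_union_add_card_inter A B
  have hABC := Finset.card_union_add_card_inter (A ∪ B) C
  have hdistr : (A ∪ B) ∩ C = (A ∩ C) ∪ (B ∩ C) := Finset.union_inter_distrib_right ..
  have hsplit : ((A ∪ B) ∩ C).card ≤ (A ∩ C).card + (B ∩ C).card := by
    rw [hdistr]; exact Finset.card_union_le _ _
  have huniv : (A ∪ B ∪ C).card ≤ n := Finset.card_le_univ _
  have hdA : A.card = G.degree u := SimpleGraph.card_neighborFinset_eq_degree _ _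
  have hdB : B.card = G.degree v := SimpleGraph.card_neighborFinset_eq_degree _ _
  have hdC : C.card = G.degree w := SimpleGraph.card_neighborFinset_eq_degree _ _
  have h1 := hδ u
  have h2 := hδ v
  have h3 := hδ w
  -- sum of pairwise codegrees ≥ 3k + 2, so one of them is ≥ k
  by_cases hab : k ≤ (A ∩ B).card
  · exact ⟨u, v, hu.symm, hab⟩
  by_cases hac : k ≤ (A ∩ C).card
  · exact ⟨u, w, huw, hac⟩
  refine ⟨v, w, hvw, ?_⟩
  show k ≤ (B ∩ C).card
  omega
end

section
/- Let G be an edge-colored graph on n vertices, where n is odd. If δ^c(G) ≥ n−1, then G contains a properly colored spanning friendship graph F_{(n−1)/2}: there exist a vertex v and a partition of V(G) \ {v} into (n−1)/2 pairs {x₁,y₁},…,{x_{(n−1)/2}, y_{(n−1)/2}} such that v is adjacent to every other vertex, each xᵢyᵢ is an edge of G, and the subgraph consisting of all edges vxᵢ, vyᵢ, xᵢyᵢ is properly colored, i.e., any two of these edges that share an endpoint receive distinct colors. -/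
private lemma key16 {V : Type*} [Fintype V] (G : SimpleGraph V) (c : Sym2 V → ℕ)
    (hδ : ∀ v : V, Fintype.card V - 1 ≤ colorDeg G c v) (v : V) :
    (∀ w, w ≠ v → G.Adj v w) ∧
    (∀ u w, G.Adj v u → G.Adj v w → c s(v, u) = c s(v, w) → u = w) := by
  classical
  set S := G.neighborFinset v with hS
  have hsub : S ⊆ Finset.univ.erase v := by
    intro u hu
    simp only [Finset.mem_erase, Finset.mem_univ, and_true]
    exact (G.ne_of_adj ((G.mem_neighborFinset v u).1 hu)).symm
  have hcd : colorDeg G c v = (S.image fun u => c s(v, u)).card := by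
    rw [colorDeg, ← Set.ncard_coe_finset]
    congr 1
    ext β
    simp [hS, SimpleGraph.mem_neighborFinset, eq_comm]
  have h1 : (S.image fun u => c s(v, u)).card ≤ S.card := Finset.card_image_le
  have h2 : S.card ≤ (Finset.univ.erase v).card := Finset.card_le_card hsub
  have h3 : (Finset.univ.erase v).card = Fintype.card V - 1 := by
    rw [Finset.card_erase_of_mem (Finset.mem_univ v), Finset.card_univ]
  have hge := hδ v
  rw [hcd] at hge
  have hScard : S.card = Fintype.card V - 1 := le_antisymm (h3 ▸ h2) (le_trans hge h1)
  have hSeq : S = Finset.univ.erase v := Finset.eq_of_subset_of_card_le hsub (by omega)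
  have hinj : Set.InjOn (fun u => c s(v, u)) ↑S :=
    Finset.card_image_iff.1 (by omega)
  constructor
  · intro w hw
    have : w ∈ S := by rw [hSeq]; simp [hw]
    exact (G.mem_neighborFinset v w).1 this
  · intro u w hu hw h
    exact hinj (by simp [hS, hu]) (by simp [hS, hw]) h

/-- If `n` is odd and `δ^c(G) ≥ n-1`, then `G` contains a properly colored spanning
friendship graph `F_{(n-1)/2}`: a vertex `v` and a partition of the remaining
vertices into `(n-1)/2` pairs `{x i, y i}`, with `v` adjacent to every other vertex,
each `x i y i` an edge, and the subgraph formed by all edges `v(x i)`, `v(y i)`,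
`(x i)(y i)` properly colored (adjacent edges get distinct colors). -/
theorem statement16 {V : Type*} [Fintype V] (G : SimpleGraph V) (c : Sym2 V → ℕ)
    (hodd : Odd (Fintype.card V))
    (hδ : ∀ v : V, Fintype.card V - 1 ≤ colorDeg G c v) :
    ∃ (v : V) (x y : Fin ((Fintype.card V - 1) / 2) → V),
      Function.Injective (Sum.elim x y) ∧
      (∀ i, x i ≠ v ∧ y i ≠ v) ∧
      (∀ w : V, w = v ∨ ∃ i, w = x i ∨ w = y i) ∧
      (∀ w : V, w ≠ v → G.Adj v w) ∧
      (∀ i, G.Adj (x i) (y i)) ∧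
      Function.Injective (fun p => c s(v, Sum.elim x y p)) ∧
      (∀ i, c s(x i, y i) ≠ c s(v, x i) ∧ c s(x i, y i) ≠ c s(v, y i)) := by
  classical
  obtain ⟨m, hm⟩ := hodd
  have hn1 : 0 < Fintype.card V := by omega
  obtain ⟨v⟩ : Nonempty V := Fintype.card_pos_iff.1 hn1
  have hK := key16 G c hδ
  have hadj : ∀ a b : V, a ≠ b → G.Adj a b := fun a b h => (hK a).1 b h.symm
  have hcardsub : Fintype.card {w : V // w ≠ v} = Fintype.card V - 1 := by
    simp [Fintype.card_subtype_compl, Fintype.card_subtype_eq]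
  have hce : Fintype.card (Fin ((Fintype.card V - 1) / 2) ⊕ Fin ((Fintype.card V - 1) / 2))
      = Fintype.card {w : V // w ≠ v} := by
    simp only [Fintype.card_sum, Fintype.card_fin, hcardsub]
    omega
  let e := Fintype.equivOfCardEq hce
  refine ⟨v, fun i => (e (Sum.inl i)).val, fun i => (e (Sum.inr i)).val, ?_, ?_, ?_, ?_, ?_, ?_, ?_⟩
  · have heq : Sum.elim (fun i => (e (Sum.inl i)).val) (fun i => (e (Sum.inr i)).val)
        = Subtype.val ∘ e := by funext p; cases p <;> rfl
    rw [heq]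
    exact Subtype.val_injective.comp e.injective
  · exact fun i => ⟨(e (Sum.inl i)).2, (e (Sum.inr i)).2⟩
  · intro w
    by_cases hw : w = v
    · exact Or.inl hw
    · obtain ⟨p, hp⟩ := e.surjective ⟨w, hw⟩
      right
      cases p with
      | inl i => exact ⟨i, Or.inl (congrArg Subtype.val hp).symm⟩
      | inr i => exact ⟨i, Or.inr (congrArg Subtype.val hp).symm⟩
  · exact fun w hw => (hK v).1 w hw
  · intro i
    refine hadj _ _ fun h => ?_
    have : e (Sum.inl i) = e (Sum.inr i) := Subtype.val_injective h
    exact absurd (e.injective this) (by simp)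
  · intro p q h
    apply e.injective
    apply Subtype.val_injective
    have hp : Sum.elim (fun i => (e (Sum.inl i)).val) (fun i => (e (Sum.inr i)).val) p
        = (e p).val := by cases p <;> rfl
    have hq : Sum.elim (fun i => (e (Sum.inl i)).val) (fun i => (e (Sum.inr i)).val) q
        = (e q).val := by cases q <;> rfl
    simp only [hp, hq] at h
    exact (hK v).2 _ _ ((hK v).1 _ (e p).2) ((hK v).1 _ (e q).2) h
  · intro i
    set a := (e (Sum.inl i)).val with ha
    set b := (e (Sum.inr i)).val with hb
    have hab : a ≠ b := fun h => by
      have := e.injective (Subtype.val_injective h)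
      simp at this
    have hav : a ≠ v := (e (Sum.inl i)).2
    have hbv : b ≠ v := (e (Sum.inr i)).2
    constructor
    · intro h
      rw [show s(v, a) = s(a, v) from Sym2.eq_swap] at h
      exact hbv ((hK a).2 b v (hadj a b hab) (hadj a v hav) h)
    · intro h
      rw [show s(a, b) = s(b, a) from Sym2.eq_swap,
          show s(v, b) = s(b, v) from Sym2.eq_swap] at h
      exact hav ((hK b).2 a v (hadj b a hab.symm) (hadj b v hbv) h)
end
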